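/- arXiv:1504.00615 — 7 statements merged into one kernel-verified Lean document; each statement's English description precedes it below -/
import Mathlib

section
/- Let p(z) = a_0 + a_1 z + ... + a_n z^n be a self-inversive polynomial of degree n and let l be a natural number with 2l < n. If |a_{n-l}| > (1/2)·(n/(n-2l))·Σ_{k=0, k∉{l, n-l}}^{n} |a_k|, then every root of p lying on the complex unit circle U is a simple root of p. -/
/-!
At a multiple root `z` of `p` both `p(z)` and `z p'(z)` vanish, hence so does
`∑ (k - l) a_k z^k`. On `|z| = 1` this isolates the `k = n - l` term:
`(n - 2l)|a_{n-l}| ≤ ∑_{k ≠ l, n-l} |k - l| |a_k|`. Self-inversivity gives `|a_{n-k}| = |a_k|`,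
so the weight `|k - l|` may be averaged with its reflection `|n - k - l|`, and
`|k - l| + |n - k - l| ≤ n` bounds the right-hand side by `(n/2) ∑_{k ≠ l, n-l} |a_k|`,
contradicting the hypothesis.
-/

open Polynomial Finset

section Polynomial

variable {R : Type*} [CommRing R]

theorem eval_sum_C_mul_X_pow (a : ℕ → R) (s : Finset ℕ) (z : R) :
    (∑ k ∈ s, C (a k) * X ^ k).eval z = ∑ k ∈ s, a k * z ^ k := by
  simp [eval_finsetSum]

theorem mul_eval_derivative_sum_C_mul_X_pow (a : ℕ → R) (s : Finset ℕ) (z : R) :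
    z * (derivative (∑ k ∈ s, C (a k) * X ^ k)).eval z = ∑ k ∈ s, (k : R) * a k * z ^ k := by
  simp only [derivative_sum, derivative_C_mul_X_pow, eval_finsetSum, eval_mul, eval_C,
    eval_pow, eval_X, mul_sum]
  refine sum_congr rfl fun k _ => ?_
  cases k with
  | zero => simp
  | succ m => push_cast; ring

theorem sum_sub_mul_eq_zero_of_isRoot_of_isRoot_derivative {a : ℕ → R} {s : Finset ℕ} {z : R}
    (l : R) (h₀ : (∑ k ∈ s, C (a k) * X ^ k).IsRoot z)
    (h₁ : (derivative (∑ k ∈ s, C (a k) * X ^ k)).IsRoot z) :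
    ∑ k ∈ s, ((k : R) - l) * a k * z ^ k = 0 := by
  have hp := eval_sum_C_mul_X_pow a s z
  have hzp := mul_eval_derivative_sum_C_mul_X_pow a s z
  rw [h₀.eq_zero] at hp
  rw [h₁.eq_zero, mul_zero] at hzp
  calc ∑ k ∈ s, ((k : R) - l) * a k * z ^ k
      = ∑ k ∈ s, (k : R) * a k * z ^ k - l * ∑ k ∈ s, a k * z ^ k := by
        simp only [sub_mul, sum_sub_distrib, mul_sum, mul_assoc]
    _ = 0 := by rw [← hp, ← hzp]; ring

end Polynomial

theorem norm_le_sum_norm_erase_of_sum_eq_zero {ι E : Type*} [DecidableEq ι]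
    [SeminormedAddCommGroup E] {s : Finset ι} {f : ι → E} (h : ∑ j ∈ s, f j = 0) {i : ι}
    (hi : i ∈ s) : ‖f i‖ ≤ ∑ j ∈ s.erase i, ‖f j‖ := by
  rw [eq_neg_of_add_eq_zero_left ((add_sum_erase s f hi).trans h), norm_neg]
  exact norm_sum_le _ _

theorem sum_comp_sub_eq_of_reflect_mem {M : Type*} [AddCommMonoid M] {n : ℕ} {s : Finset ℕ}
    (hs : ∀ k ∈ s, k ≤ n ∧ n - k ∈ s) (F : ℕ → M) :
    ∑ k ∈ s, F (n - k) = ∑ k ∈ s, F k :=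
  sum_nbij' (n - ·) (n - ·) (fun k hk => (hs k hk).2) (fun k hk => (hs k hk).2)
    (fun k hk => Nat.sub_sub_self (hs k hk).1) (fun k hk => Nat.sub_sub_self (hs k hk).1)
    (fun _ _ => rfl)

theorem abs_sub_add_abs_sub_le {n l k : ℕ} (hl : 2 * l ≤ n) (hk : k ≤ n) :
    |(k : ℝ) - l| + |(n : ℝ) - k - l| ≤ n := by
  have hk' : (k : ℝ) ≤ n := by exact_mod_cast hk
  have hl' : (2 : ℝ) * l ≤ n := by exact_mod_cast hl
  rcases abs_cases ((k : ℝ) - l) with ⟨h₁, _⟩ | ⟨h₁, _⟩ <;>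
    rcases abs_cases ((n : ℝ) - k - l) with ⟨h₂, _⟩ | ⟨h₂, _⟩ <;>
    rw [h₁, h₂] <;> linarith [(k.cast_nonneg : (0 : ℝ) ≤ k)]

theorem two_mul_sum_abs_sub_mul_le {n l : ℕ} (hl : 2 * l ≤ n) {s : Finset ℕ}
    (hs : ∀ k ∈ s, k ≤ n ∧ n - k ∈ s) {f : ℕ → ℝ} (hf₀ : ∀ k ∈ s, 0 ≤ f k)
    (hf : ∀ k ≤ n, f (n - k) = f k) :
    2 * ∑ k ∈ s, |(k : ℝ) - l| * f k ≤ n * ∑ k ∈ s, f k := by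
  have hreflect : ∑ k ∈ s, |(k : ℝ) - l| * f k = ∑ k ∈ s, |(n : ℝ) - k - l| * f k := by
    refine (sum_comp_sub_eq_of_reflect_mem hs _).symm.trans (sum_congr rfl fun k hk => ?_)
    rw [hf k (hs k hk).1, Nat.cast_sub (hs k hk).1]
  calc 2 * ∑ k ∈ s, |(k : ℝ) - l| * f k
      = ∑ k ∈ s, (|(k : ℝ) - l| + |(n : ℝ) - k - l|) * f k := by
        rw [two_mul]
        nth_rw 2 [hreflect]
        simp only [add_mul, sum_add_distrib]
    _ ≤ ∑ k ∈ s, n * f k :=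
        sum_le_sum fun k hk =>
          mul_le_mul_of_nonneg_right (abs_sub_add_abs_sub_le hl (hs k hk).1) (hf₀ k hk)
    _ = n * ∑ k ∈ s, f k := (mul_sum _ _ _).symm

theorem sub_two_mul_norm_le_of_sum_sub_mul_eq_zero {n l : ℕ} (hl : 2 * l ≤ n) {a : ℕ → ℂ}
    {z : ℂ} (hz : ‖z‖ = 1) (h : ∑ k ∈ range (n + 1), ((k : ℂ) - l) * a k * z ^ k = 0) :
    ((n : ℝ) - 2 * l) * ‖a (n - l)‖ ≤
      ∑ k ∈ (range (n + 1)).filter (fun k => k ≠ l ∧ k ≠ n - l), |(k : ℝ) - l| * ‖a k‖ := by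
  have hnorm : ∀ k : ℕ, ‖((k : ℂ) - l) * a k * z ^ k‖ = |(k : ℝ) - l| * ‖a k‖ := by
    intro k
    rw [norm_mul, norm_mul, norm_pow, hz, one_pow, mul_one,
      show (k : ℂ) - l = ((k - l : ℝ) : ℂ) by push_cast; rfl, Complex.norm_real, Real.norm_eq_abs]
  have hl' : (2 : ℝ) * l ≤ n := by exact_mod_cast hl
  have hcentral := norm_le_sum_norm_erase_of_sum_eq_zero h (mem_range.2 (by omega : n - l < n + 1))
  simp only [hnorm] at hcentral
  rw [Nat.cast_sub (by omega), abs_of_nonneg (by linarith),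
    ← sum_erase (f := fun k : ℕ => |(k : ℝ) - l| * ‖a k‖) (a := l) _ (by simp)] at hcentral
  convert hcentral using 2
  · ring
  · ext k
    simp only [mem_filter, mem_erase, mem_range]
    omega

theorem selfInversive_roots_on_unit_circle_simple_general
    (n l : ℕ) (a : ℕ → ℂ) (ω : ℂ)
    (hω : ‖ω‖ = 1)
    (hsi : ∀ k ≤ n, a (n - k) = ω * (starRingEnd ℂ) (a k))
    (hl : 2 * l < n)
    (hineq : ‖a (n - l)‖ >
      (1 / 2) * ((n : ℝ) / ((n : ℝ) - 2 * l)) *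
        ∑ k ∈ (Finset.range (n + 1)).filter (fun k => k ≠ l ∧ k ≠ n - l),
          ‖a k‖) :
    ∀ z : ℂ, ‖z‖ = 1 →
      (∑ k ∈ Finset.range (n + 1), Polynomial.C (a k) * Polynomial.X ^ k).eval z = 0 →
      Polynomial.rootMultiplicity z
        (∑ k ∈ Finset.range (n + 1), Polynomial.C (a k) * Polynomial.X ^ k) = 1 := by
  intro z hz hpz
  set p := ∑ k ∈ range (n + 1), C (a k) * X ^ k
  set S := (range (n + 1)).filter (fun k => k ≠ l ∧ k ≠ n - l) with hS
  have hgap : (0 : ℝ) < n - 2 * l := by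
    have : (2 : ℝ) * l < n := by exact_mod_cast hl
    linarith
  have hreflect : ∀ k ∈ S, k ≤ n ∧ n - k ∈ S := by
    intro k
    simp only [hS, mem_filter, mem_range]
    omega
  have hnorm_reflect : ∀ k ≤ n, ‖a (n - k)‖ = ‖a k‖ := fun k hk => by simp [hsi k hk, hω]
  have hsimple : ¬ (derivative p).IsRoot z := by
    intro hd
    have hcentral := sub_two_mul_norm_le_of_sum_sub_mul_eq_zero hl.le hz
      (sum_sub_mul_eq_zero_of_isRoot_of_isRoot_derivative (a := a) (l : ℂ) hpz hd)
    have havg := two_mul_sum_abs_sub_mul_le hl.le hreflect (fun k _ => norm_nonneg (a k))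
      hnorm_reflect
    have hineq' := (mul_lt_mul_iff_right₀ hgap).2 hineq
    rw [show ((n : ℝ) - 2 * l) * (1 / 2 * (n / (n - 2 * l)) * ∑ k ∈ S, ‖a k‖)
      = n / 2 * ∑ k ∈ S, ‖a k‖ by field_simp] at hineq'
    linarith
  have hp : p ≠ 0 := fun h => hsimple (by simp [h])
  exact le_antisymm (not_lt.1 fun h => hsimple ((one_lt_rootMultiplicity_iff_isRoot hp).1 h).2)
    ((rootMultiplicity_pos hp).2 hpz)

/-- If a self-inversive polynomial `p(z) = a₀ + a₁ z + ⋯ + aₙ zⁿ` of degree `n`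
satisfies `|a_{n-l}| > (1/2)·(n/(n-2l))·∑_{k ≠ l, n-l} |a_k|` with `2l < n`, then
every root of `p` on the complex unit circle is simple. -/
theorem selfInversive_roots_on_unit_circle_simple
    (n l : ℕ) (a : ℕ → ℂ) (ω : ℂ)
    (hω : ‖ω‖ = 1)
    (han : a n ≠ 0)
    (hsi : ∀ k ≤ n, a (n - k) = ω * (starRingEnd ℂ) (a k))
    (hl : 2 * l < n)
    (hineq : ‖a (n - l)‖ >
      (1 / 2) * ((n : ℝ) / ((n : ℝ) - 2 * l)) *
        ∑ k ∈ (Finset.range (n + 1)).filter (fun k => k ≠ l ∧ k ≠ n - l),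
          ‖a k‖) :
    ∀ z : ℂ, ‖z‖ = 1 →
      (∑ k ∈ Finset.range (n + 1), Polynomial.C (a k) * Polynomial.X ^ k).eval z = 0 →
      Polynomial.rootMultiplicity z
        (∑ k ∈ Finset.range (n + 1), Polynomial.C (a k) * Polynomial.X ^ k) = 1 :=
  selfInversive_roots_on_unit_circle_simple_general n l a ω hω hsi hl hineq
end

section
/- Let p(z) = a_0 + a_1 z + ... + a_n z^n be a self-inversive polynomial of degree n and let l be a natural number with 2l < n. If |a_{n-l}| > (1/2)·(n/(n-2l))·Σ_{k=0, k∉{l, n-l}}^{n} |a_k|, then p has exactly l roots, counted with multiplicity, in the open unit disk {z ∈ ℂ : |z| < 1}, and exactly l roots, counted with multiplicity, in the region {z ∈ ℂ : |z| > 1}. -/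
/-!
Put `c k = μ a_k` with `μ² ω = 1`. On the unit circle `z = e^{2it}` the function
`g t = μ e^{-int} p(e^{2it}) = ∑ c_k e^{i(2k-n)t}` is real, and its two dominant terms add up to
`2A cos φ`, where `A = |a_{n-l}|` and `φ = (n-2l)t + arg c_{n-l}`. The coefficient bound is what
makes `sin φ · g' - (n-2l) cos φ · g ≤ n ∑_{k ≠ l, n-l} |a_k| - 2A(n-2l) < 0` for every `t`.
At the zeros of `sin φ` this says that `g` alternates in sign, and between them that `g / sin φ`
is strictly decreasing. So each of the `n-2l` half-periods of `cos φ` within one period of `g`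
contains exactly one zero of `g`, and it is simple since `g' ≠ 0` there: `p` has exactly `n-2l`
roots on the unit circle, all simple. The roots of a self-inversive polynomial are symmetric under
`z ↦ 1/z̄` (its reverse is `ω p̄`), so the other `2l` roots split evenly between the inside and the
outside of the disk.
-/

open Polynomial Finset
open scoped Real
open Complex ComplexConjugate

section SturmComparison

variable {h h' : ℝ → ℝ}

theorem neg_one_pow_mul_pos_of_sturm
    (hs : ∀ u, Real.sin (u * π) * h' u - π * Real.cos (u * π) * h u < 0) (j : ℕ) :
    0 < (-1) ^ j * h j := by
  have := hs j
  rw [Real.sin_nat_mul_pi, Real.cos_nat_mul_pi] at this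
  nlinarith [Real.pi_pos]

theorem exists_zero_mem_Ioo_of_sturm (hd : ∀ u, HasDerivAt h (h' u) u)
    (hs : ∀ u, Real.sin (u * π) * h' u - π * Real.cos (u * π) * h u < 0) (j : ℕ) :
    ∃ u ∈ Set.Ioo (j : ℝ) (j + 1), h u = 0 := by
  have hcont : ContinuousOn (fun u => (-1) ^ j * h u) (Set.Icc (j : ℝ) (j + 1)) :=
    (continuousOn_const.mul fun u _ => (hd u).continuousAt.continuousWithinAt)
  have hj := neg_one_pow_mul_pos_of_sturm hs j
  have hj1 := neg_one_pow_mul_pos_of_sturm hs (j + 1)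
  rw [pow_succ] at hj1
  push_cast at hj1
  obtain ⟨u, hu, hu0⟩ := intermediate_value_Ioo' (by linarith) hcont
    (show (0 : ℝ) ∈ Set.Ioo ((-1) ^ j * h (j + 1)) ((-1) ^ j * h j) from ⟨by linarith, hj⟩)
  exact ⟨u, hu, by simpa using hu0⟩

/-- Where `sin (u π) ≠ 0`, the hypothesis `hs` says that `h / sin (· π)` is strictly decreasing. -/
theorem zeros_Ioo_subsingleton_of_sturm (hd : ∀ u, HasDerivAt h (h' u) u)
    (hs : ∀ u, Real.sin (u * π) * h' u - π * Real.cos (u * π) * h u < 0) (j : ℕ) :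
    {u ∈ Set.Ioo (j : ℝ) (j + 1) | h u = 0}.Subsingleton := by
  have hsin : ∀ u ∈ Set.Ioo (j : ℝ) (j + 1), Real.sin (u * π) ≠ 0 := by
    intro u hu h0
    have hpos : 0 < Real.sin (u * π - j * π) :=
      Real.sin_pos_of_pos_of_lt_pi (by nlinarith [hu.1, Real.pi_pos])
        (by nlinarith [hu.2, Real.pi_pos])
    rw [Real.sin_sub_nat_mul_pi, h0, mul_zero] at hpos
    exact hpos.false
  have hanti : StrictAntiOn (fun u => h u / Real.sin (u * π)) (Set.Ioo (j : ℝ) (j + 1)) := by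
    refine strictAntiOn_of_hasDerivWithinAt_neg (convex_Ioo _ _)
      (f' := fun u => (h' u * Real.sin (u * π) - h u * (Real.cos (u * π) * π)) /
        Real.sin (u * π) ^ 2) ?_ ?_ ?_
    · intro u hu
      exact ((hd u).continuousAt.div (by fun_prop) (hsin u hu)).continuousWithinAt
    · intro u hu
      rw [interior_Ioo] at hu
      exact (((hd u).div ((hasDerivAt_mul_const π).sin) (hsin u hu))).hasDerivWithinAt
    · intro u hu
      rw [interior_Ioo] at hu
      refine div_neg_of_neg_of_pos ?_ (sq_pos_of_ne_zero (hsin u hu))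
      linarith [hs u]
  rintro x ⟨hx, hx0⟩ y ⟨hy, hy0⟩
  exact hanti.injOn hx hy (by simp only [hx0, hy0, zero_div])

theorem ncard_zeros_Ico_of_sturm (hd : ∀ u, HasDerivAt h (h' u) u)
    (hs : ∀ u, Real.sin (u * π) * h' u - π * Real.cos (u * π) * h u < 0) (M : ℕ) :
    {u ∈ Set.Ico (0 : ℝ) M | h u = 0}.ncard = M := by
  have hnot_int : ∀ j : ℕ, h j ≠ 0 := fun j h0 => by
    simpa [h0] using neg_one_pow_mul_pos_of_sturm hs j
  have hfloor : ∀ u, 0 ≤ u → h u = 0 → u ∈ Set.Ioo (⌊u⌋₊ : ℝ) (⌊u⌋₊ + 1) := fun u hu h0 =>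
    ⟨(Nat.floor_le hu).lt_of_ne fun he => hnot_int _ (he ▸ h0), Nat.lt_floor_add_one u⟩
  have hbij : Set.BijOn (fun u => ⌊u⌋₊) {u ∈ Set.Ico (0 : ℝ) M | h u = 0}
      (Finset.range M : Set ℕ) := by
    refine ⟨fun u ⟨hu, _⟩ => ?_, fun u ⟨hu, hu0⟩ v ⟨hv, hv0⟩ huv => ?_, fun j hj => ?_⟩
    · exact Finset.mem_coe.2 (Finset.mem_range.2 ((Nat.floor_lt hu.1).2 hu.2))
    · refine zeros_Ioo_subsingleton_of_sturm hd hs ⌊u⌋₊ ⟨hfloor u hu.1 hu0, hu0⟩ ⟨?_, hv0⟩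
      simpa only [huv] using hfloor v hv.1 hv0
    · obtain ⟨u, hu, hu0⟩ := exists_zero_mem_Ioo_of_sturm hd hs j
      have hjM : (j : ℝ) + 1 ≤ M := by exact_mod_cast Finset.mem_range.1 hj
      refine ⟨u, ⟨⟨by linarith [hu.1, j.cast_nonneg (α := ℝ)], by linarith [hu.2]⟩, hu0⟩, ?_⟩
      exact (Nat.floor_eq_iff (by linarith [hu.1, j.cast_nonneg (α := ℝ)])).2 ⟨hu.1.le, hu.2⟩
  rw [← hbij.injOn.ncard_image, hbij.image_eq, Set.ncard_coe_finset, Finset.card_range]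

end SturmComparison

def offDominant (n l : ℕ) : Finset ℕ := (range (n + 1)).filter (fun k => k ≠ l ∧ k ≠ n - l)

theorem le_of_mem_offDominant {n l k : ℕ} (hk : k ∈ offDominant n l) : k ≤ n :=
  Nat.lt_succ_iff.1 (mem_range.1 (mem_filter.1 hk).1)

theorem sum_range_eq_add_add_sum_offDominant {M : Type*} [AddCommMonoid M] (f : ℕ → M)
    {n l : ℕ} (hl : 2 * l < n) :
    ∑ k ∈ range (n + 1), f k = f l + f (n - l) + ∑ k ∈ offDominant n l, f k := by
  have hpair : (range (n + 1)).filter (fun k => ¬(k ≠ l ∧ k ≠ n - l)) = {l, n - l} := by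
    ext k
    simp only [mem_filter, mem_range, mem_insert, mem_singleton]
    omega
  rw [← sum_filter_not_add_sum_filter _ (fun k => k ≠ l ∧ k ≠ n - l), hpair,
    sum_pair (by omega), offDominant]

theorem norm_mul_cos_add_mul_sin_mul_I_le {a b r : ℝ} (hr : 0 ≤ r) (ha : a ^ 2 ≤ r ^ 2)
    (hb : b ^ 2 ≤ r ^ 2) (θ : ℝ) : ‖((a * Real.cos θ : ℝ) : ℂ) + (b * Real.sin θ : ℝ) * I‖ ≤ r := by
  rw [norm_add_mul_I, Real.sqrt_le_left hr]
  nlinarith [Real.sin_sq_add_cos_sq θ, sq_nonneg (Real.sin θ), sq_nonneg (Real.cos θ)]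

theorem ncard_Ico_rescale (Q : ℝ → Prop) {M : ℝ} (hM : 0 < M) (β : ℝ) :
    {t ∈ Set.Ico (-β / M) (-β / M + π) | Q t}.ncard
      = {u ∈ Set.Ico 0 M | Q ((u * π - β) / M)}.ncard := by
  set τ : ℝ → ℝ := fun u => (u * π - β) / M
  have himage : τ '' {u ∈ Set.Ico 0 M | Q (τ u)} = {t ∈ Set.Ico (-β / M) (-β / M + π) | Q t} := by
    ext t
    simp only [Set.mem_image, Set.mem_ofPred_eq, Set.mem_Ico]
    constructor
    · rintro ⟨u, ⟨⟨hu0, huM⟩, hQ⟩, rfl⟩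
      refine ⟨⟨?_, ?_⟩, hQ⟩ <;> simp only [τ] <;> field_simp <;> nlinarith [Real.pi_pos]
    · rintro ⟨⟨ht0, htπ⟩, hQ⟩
      have hinv : τ ((M * t + β) / π) = t := by simp only [τ]; field_simp; ring
      have h0 : -β ≤ t * M := (div_le_iff₀ hM).1 ht0
      have hπ : (t - π) * M < -β := (lt_div_iff₀ hM).1 (by linarith)
      refine ⟨(M * t + β) / π, ⟨⟨div_nonneg (by linarith) Real.pi_pos.le,
        (div_lt_iff₀ Real.pi_pos).2 (by linarith)⟩, by rwa [hinv]⟩, hinv⟩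
  rw [← himage, Set.InjOn.ncard_image]
  intro u _ v _ huv
  simpa [τ, hM.ne', Real.pi_pos.ne'] using huv

noncomputable section TrigPoly

variable (c : ℕ → ℂ) (n : ℕ)

def trigTerm (k : ℕ) (t : ℝ) : ℂ := c k * exp (((2 * k - n : ℝ) * t : ℝ) * I)

/-- With `c k = μ * p.coeff k` this is `μ e^{-int} p(e^{2it})` (`trigPoly_eq_eval`); the circle is
parametrized by the half angle so that `e^{-int}` makes sense for odd `n`. -/
def trigPoly (t : ℝ) : ℂ := ∑ k ∈ range (n + 1), trigTerm c n k t

def trigPolyDeriv (t : ℝ) : ℂ := ∑ k ∈ range (n + 1), (2 * k - n : ℝ) * I * trigTerm c n k t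

theorem hasDerivAt_trigTerm (k : ℕ) (t : ℝ) :
    HasDerivAt (trigTerm c n k) ((2 * k - n : ℝ) * I * trigTerm c n k t) t := by
  have := (((hasDerivAt_id t).const_mul (2 * k - n : ℝ)).ofReal_comp.mul_const I).cexp.const_mul
    (c k)
  refine this.congr_deriv ?_
  simp only [trigTerm, id, mul_one]
  ring

theorem hasDerivAt_trigPoly (t : ℝ) : HasDerivAt (trigPoly c n) (trigPolyDeriv c n t) t :=
  HasDerivAt.fun_sum fun k _ => hasDerivAt_trigTerm c n k t

theorem hasDerivAt_re_trigPoly (t : ℝ) :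
    HasDerivAt (fun t => (trigPoly c n t).re) (trigPolyDeriv c n t).re t :=
  reCLM.hasFDerivAt.comp_hasDerivAt t (hasDerivAt_trigPoly c n t)

theorem norm_trigTerm (k : ℕ) (t : ℝ) : ‖trigTerm c n k t‖ = ‖c k‖ := by
  rw [trigTerm, norm_mul, norm_exp_ofReal_mul_I, mul_one]

variable {c n}

theorem conj_trigTerm {k : ℕ} (hk : k ≤ n) (hc : c (n - k) = conj (c k)) (t : ℝ) :
    conj (trigTerm c n k t) = trigTerm c n (n - k) t := by
  rw [trigTerm, trigTerm, map_mul, hc, ← exp_conj, map_mul, conj_ofReal, conj_I,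
    Nat.cast_sub hk]
  congr 2
  push_cast
  ring

theorem trigTerm_sub_eq_norm_mul_exp {l : ℕ} (hl : l ≤ n) (t : ℝ) :
    trigTerm c n (n - l) t =
      ‖c (n - l)‖ * exp (((n - 2 * l) * t + arg (c (n - l)) : ℝ) * I) := by
  conv_lhs => rw [trigTerm, ← norm_mul_exp_arg_mul_I (c (n - l))]
  rw [mul_assoc, ← exp_add, Nat.cast_sub hl]
  congr 2
  push_cast
  ring

theorem conj_trigPoly (hc : ∀ k ≤ n, c (n - k) = conj (c k)) (t : ℝ) :
    conj (trigPoly c n t) = trigPoly c n t := by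
  rw [trigPoly, map_sum]
  conv_rhs => rw [← sum_range_reflect]
  refine sum_congr rfl fun k hk => ?_
  have hk : k ≤ n := Nat.lt_succ_iff.1 (mem_range.1 hk)
  rw [conj_trigTerm hk (hc k hk), Nat.add_sub_cancel]

theorem sin_mul_re_trigPolyDeriv_sub_le {l : ℕ} (hl : 2 * l < n)
    (hcl : c l = conj (c (n - l))) (t : ℝ) :
    Real.sin ((n - 2 * l) * t + arg (c (n - l))) * (trigPolyDeriv c n t).re
        - (n - 2 * l) * Real.cos ((n - 2 * l) * t + arg (c (n - l))) * (trigPoly c n t).re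
      ≤ n * ∑ k ∈ offDominant n l, ‖c k‖ - 2 * ‖c (n - l)‖ * (n - 2 * l) := by
  set M : ℝ := n - 2 * l with hM
  set φ := M * t + arg (c (n - l)) with hφ
  have hMn : 0 ≤ M ∧ M ≤ n := by
    have : (2 * l : ℝ) < n := by exact_mod_cast hl
    constructor <;> linarith [(Nat.cast_nonneg l : (0 : ℝ) ≤ l)]
  -- the left-hand side is `Re ∑ trigTerm k * ζ k`; the dominant pair contributes `-2AM`, every
  -- other term at most `n ‖c k‖` in absolute value
  set ζ : ℕ → ℂ := fun k => (-M * Real.cos φ : ℝ) + ((2 * k - n) * Real.sin φ : ℝ) * I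
  have hsum : Real.sin φ * (trigPolyDeriv c n t).re - M * Real.cos φ * (trigPoly c n t).re
      = (∑ k ∈ range (n + 1), trigTerm c n k t * ζ k).re := by
    simp only [trigPolyDeriv, trigPoly, re_sum, mul_sum, ← sum_sub_distrib]
    refine sum_congr rfl fun k _ => ?_
    simp only [ζ, mul_re, mul_im, add_re, add_im, ofReal_re, ofReal_im, I_re, I_im]
    ring
  have hdom : (trigTerm c n l t * ζ l + trigTerm c n (n - l) t * ζ (n - l)).re
      = -(2 * ‖c (n - l)‖ * M) := by
    have hwl : trigTerm c n l t = conj (trigTerm c n (n - l) t) := by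
      rw [conj_trigTerm (Nat.sub_le n l) (by rwa [Nat.sub_sub_self (by omega : l ≤ n)]),
        Nat.sub_sub_self (by omega)]
    rw [hwl, trigTerm_sub_eq_norm_mul_exp (by omega), ← hM, ← hφ]
    simp only [ζ, Nat.cast_sub (by omega : l ≤ n), add_re, add_im, mul_re, conj_re, conj_im, mul_im,
      ofReal_re, ofReal_im, I_re, I_im, exp_ofReal_mul_I_re, exp_ofReal_mul_I_im]
    linear_combination (-(2 * ‖c (n - l)‖ * M)) * Real.sin_sq_add_cos_sq φ
  have hrest : |(∑ k ∈ offDominant n l, trigTerm c n k t * ζ k).re|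
      ≤ n * ∑ k ∈ offDominant n l, ‖c k‖ := by
    refine (abs_re_le_norm _).trans ((norm_sum_le _ _).trans ?_)
    rw [mul_sum]
    refine sum_le_sum fun k hk => ?_
    have hk : (k : ℝ) ≤ n := by exact_mod_cast le_of_mem_offDominant hk
    rw [norm_mul, norm_trigTerm, mul_comm]
    exact mul_le_mul_of_nonneg_right (norm_mul_cos_add_mul_sin_mul_I_le n.cast_nonneg
      (by nlinarith) (by nlinarith [k.cast_nonneg (α := ℝ)]) φ) (norm_nonneg _)
  rw [hsum, sum_range_eq_add_add_sum_offDominant _ hl, add_re, hdom]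
  linarith [(abs_le.1 hrest).2]

theorem re_trigPolyDeriv_ne_zero {l : ℕ} (hl : 2 * l < n) (hcl : c l = conj (c (n - l)))
    (hdom : n * ∑ k ∈ offDominant n l, ‖c k‖ < 2 * ‖c (n - l)‖ * (n - 2 * l)) {t : ℝ}
    (ht : (trigPoly c n t).re = 0) : (trigPolyDeriv c n t).re ≠ 0 := fun h0 => by
  have := sin_mul_re_trigPolyDeriv_sub_le hl hcl t
  rw [ht, h0] at this
  linarith

theorem ncard_zeros_re_trigPoly {l : ℕ} (hl : 2 * l < n) (hcl : c l = conj (c (n - l)))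
    (hdom : n * ∑ k ∈ offDominant n l, ‖c k‖ < 2 * ‖c (n - l)‖ * (n - 2 * l)) :
    {t ∈ Set.Ico (-arg (c (n - l)) / (n - 2 * l)) (-arg (c (n - l)) / (n - 2 * l) + π) |
      (trigPoly c n t).re = 0}.ncard = n - 2 * l := by
  set M : ℝ := n - 2 * l
  set β := arg (c (n - l))
  have hMpos : 0 < M := by
    have : (2 * l : ℝ) < n := by exact_mod_cast hl
    linarith
  have hMcast : ((n - 2 * l : ℕ) : ℝ) = M := by rw [Nat.cast_sub hl.le]; push_cast; rfl
  -- in the time `u` with `t = τ u` the dominant term is `2A cos (u π)`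
  set τ : ℝ → ℝ := fun u => (u * π - β) / M
  have hτ : ∀ u, HasDerivAt τ (π / M) u := fun u => by
    simpa using (((hasDerivAt_id u).mul_const π).sub_const β).div_const M
  have hφ : ∀ u, M * τ u + β = u * π := fun u => by simp only [τ]; field_simp; ring
  have hd := fun u => (hasDerivAt_re_trigPoly c n (τ u)).comp u (hτ u)
  have hs : ∀ u, Real.sin (u * π) * ((trigPolyDeriv c n (τ u)).re * (π / M))
      - π * Real.cos (u * π) * (trigPoly c n (τ u)).re < 0 := fun u => by
    have key := sin_mul_re_trigPolyDeriv_sub_le hl hcl (τ u)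
    rw [hφ u] at key
    have hpos : 0 < π / M := div_pos Real.pi_pos hMpos
    have : Real.sin (u * π) * ((trigPolyDeriv c n (τ u)).re * (π / M))
        - π * Real.cos (u * π) * (trigPoly c n (τ u)).re
        = π / M * (Real.sin (u * π) * (trigPolyDeriv c n (τ u)).re
          - M * Real.cos (u * π) * (trigPoly c n (τ u)).re) := by
      field_simp
    rw [this]
    exact mul_neg_of_pos_of_neg hpos (by linarith)
  have hcount := ncard_zeros_Ico_of_sturm hd hs (n - 2 * l)
  rw [hMcast] at hcount
  rwa [ncard_Ico_rescale _ hMpos]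

end TrigPoly

theorem injOn_exp_two_mul_I (a : ℝ) :
    Set.InjOn (fun t : ℝ => exp ((2 * t : ℝ) * I)) (Set.Ico a (a + π)) := by
  intro s hs t ht hst
  obtain ⟨m, hm⟩ := exp_eq_exp_iff_exists_int.1 hst
  have hm : s - t = m * π := by
    have := congrArg im hm
    simp only [mul_im, ofReal_re, ofReal_im, I_re, I_im, add_im, intCast_re, intCast_im,
      mul_re, re_ofNat, im_ofNat] at this
    linarith
  have hm0 : m = 0 := by
    have h1 : (m : ℝ) * π < 1 * π := by linarith [hs.1, hs.2, ht.1, ht.2]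
    have h2 : (-1 : ℝ) * π < m * π := by linarith [hs.1, hs.2, ht.1, ht.2]
    have h1 : m < 1 := by exact_mod_cast lt_of_mul_lt_mul_right h1 Real.pi_pos.le
    have h2 : -1 < m := by exact_mod_cast lt_of_mul_lt_mul_right h2 Real.pi_pos.le
    omega
  rw [hm0, Int.cast_zero, zero_mul] at hm
  linarith

theorem exists_mem_Ico_exp_two_mul_I_eq {z : ℂ} (hz : ‖z‖ = 1) (a : ℝ) :
    ∃ t ∈ Set.Ico a (a + π), exp ((2 * t : ℝ) * I) = z := by
  refine ⟨toIcoMod Real.pi_pos a (arg z / 2), toIcoMod_mem_Ico _ _ _, ?_⟩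
  rw [← self_sub_toIcoDiv_zsmul, zsmul_eq_mul]
  have : ((2 * (arg z / 2 - toIcoDiv Real.pi_pos a (arg z / 2) * π) : ℝ) : ℂ) * I
      = arg z * I - toIcoDiv Real.pi_pos a (arg z / 2) * (2 * π * I) := by
    push_cast; ring
  rw [this, exp_sub, exp_int_mul_two_pi_mul_I, div_one]
  simpa [hz] using norm_mul_exp_arg_mul_I z

theorem ncard_setOf_norm_eq_one_and (Q : ℂ → Prop) (a : ℝ) :
    {z : ℂ | ‖z‖ = 1 ∧ Q z}.ncard = {t ∈ Set.Ico a (a + π) | Q (exp ((2 * t : ℝ) * I))}.ncard := by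
  rw [← ((injOn_exp_two_mul_I a).mono fun t ht => ht.1).ncard_image]
  congr 1
  ext z
  constructor
  · rintro ⟨hz, hQ⟩
    obtain ⟨t, ht, rfl⟩ := exists_mem_Ico_exp_two_mul_I_eq hz a
    exact ⟨t, ⟨ht, hQ⟩, rfl⟩
  · rintro ⟨t, ⟨-, hQ⟩, rfl⟩
    exact ⟨norm_exp_ofReal_mul_I _, hQ⟩

theorem exists_norm_eq_one_conj_eq_mul {ω : ℂ} (hω : ‖ω‖ = 1) :
    ∃ μ : ℂ, ‖μ‖ = 1 ∧ conj μ = μ * ω := by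
  obtain ⟨β, rfl⟩ : ∃ β : ℝ, exp (β * I) = ω :=
    ⟨arg ω, by simpa [hω] using norm_mul_exp_arg_mul_I ω⟩
  refine ⟨exp ((-(β / 2) : ℝ) * I), norm_exp_ofReal_mul_I _, ?_⟩
  rw [← exp_conj, map_mul, conj_ofReal, conj_I, ← exp_add]
  push_cast
  ring_nf

theorem trigPoly_eq_eval (p : ℂ[X]) (μ : ℂ) {n : ℕ} (hn : p.natDegree ≤ n) (t : ℝ) :
    trigPoly (fun k => μ * p.coeff k) n t =
      μ * exp ((-n * t : ℝ) * I) * p.eval (exp ((2 * t : ℝ) * I)) := by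
  rw [eval_eq_sum_range' (Nat.lt_succ_of_le hn), mul_sum, trigPoly]
  refine sum_congr rfl fun k _ => ?_
  have : exp (((2 * k - n : ℝ) * t : ℝ) * I)
      = exp ((-n * t : ℝ) * I) * exp ((2 * t : ℝ) * I) ^ k := by
    rw [← exp_nat_mul, ← exp_add]
    push_cast
    ring_nf
  rw [trigTerm, this]
  ring

theorem trigPolyDeriv_eq_zero_of_isRoot (p : ℂ[X]) (μ : ℂ) {n : ℕ} (hn : p.natDegree ≤ n) {t : ℝ}
    (hroot : p.IsRoot (exp ((2 * t : ℝ) * I)))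
    (hroot' : p.derivative.IsRoot (exp ((2 * t : ℝ) * I))) :
    trigPolyDeriv (fun k => μ * p.coeff k) n t = 0 := by
  have hexp : ∀ r : ℝ, HasDerivAt (fun t : ℝ => exp ((r * t : ℝ) * I))
      (exp ((r * t : ℝ) * I) * (r * I)) t := fun r => by
    simpa using (((hasDerivAt_id t).const_mul r).ofReal_comp.mul_const I).cexp
  have hF := ((hexp (-n)).const_mul μ).mul ((p.hasDerivAt _).comp t (hexp 2))
  simp only [Function.comp_apply, hroot.eq_zero, hroot'.eq_zero, mul_zero, zero_mul,
    add_zero] at hF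
  refine (hasDerivAt_trigPoly _ n t).unique (hF.congr_of_eventuallyEq (.of_forall fun s => ?_))
  simp only [trigPoly_eq_eval p μ hn, Pi.mul_apply, Function.comp_apply]

theorem Multiset.card_filter_lt_add_card_filter_eq_add_card_filter_gt {α : Type*}
    (s : Multiset α) (f : α → ℝ) (r : ℝ) :
    Multiset.card (s.filter (f · < r)) + Multiset.card (s.filter (f · = r))
      + Multiset.card (s.filter (r < f ·)) = Multiset.card s := by
  induction s using Multiset.induction_on with
  | empty => simp
  | cons a s ih =>
    rcases lt_trichotomy (f a) r with h | h | h
    · simp [h, h.ne, h.not_gt]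
      omega
    · simp [h]
      omega
    · simp [h, h.ne', h.not_gt]
      omega

namespace Polynomial

theorem ne_zero_of_mem_roots_of_coeff_zero_ne_zero {R : Type*} [CommRing R] [IsDomain R]
    {p : R[X]} (h0 : p.coeff 0 ≠ 0) {a : R} (ha : a ∈ p.roots) : a ≠ 0 := by
  rintro rfl
  rw [mem_roots', IsRoot, ← coeff_zero_eq_eval_zero] at ha
  exact h0 ha.2

theorem roots_reverse {K : Type*} [Field K] [IsAlgClosed K] {p : K[X]} (h0 : p.coeff 0 ≠ 0) :
    p.reverse.roots = p.roots.map (·⁻¹) := by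
  have hone : (1 : K[X]).reverse = 1 := by simpa using reverse_C (1 : K)
  have hX : (X : K[X]).reverse = 1 := by simpa [hone] using reverse_X_mul (1 : K[X])
  have hrev : ∀ s : Multiset K,
      (s.map fun a => X - C a).prod.reverse = (s.map fun a => C (-a) * X + C 1).prod := by
    intro s
    induction s using Multiset.induction_on with
    | empty => simpa using hone
    | cons a s ih =>
      simp only [Multiset.map_cons, Multiset.prod_cons, reverse_mul_of_domain, ih]
      rw [sub_eq_add_neg, ← C_neg, reverse_add_C, hX, natDegree_X, pow_one, C_1, add_comm]
  have hp0 : p ≠ 0 := fun h => h0 (by simp [h])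
  conv_lhs => rw [← C_leadingCoeff_mul_prod_multiset_X_sub_C (p := p)
    IsAlgClosed.card_roots_eq_natDegree]
  rw [reverse_mul_of_domain, reverse_C, hrev, roots_C_mul _ (leadingCoeff_ne_zero.2 hp0),
    roots_multiset_prod, Multiset.bind_map]
  · refine (Multiset.bind_congr fun a ha => ?_).trans (Multiset.bind_singleton _ _)
    rw [roots_C_mul_X_add_C _ (neg_ne_zero.2 (ne_zero_of_mem_roots_of_coeff_zero_ne_zero h0 ha))]
    simp
  · simp only [Multiset.mem_map, not_exists, not_and]
    intro a ha h
    have := congrArg (coeff · 0) h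
    simp at this

theorem card_roots_filter_eq_ncard {R : Type*} [CommRing R] [IsDomain R] {p : R[X]} (hp : p ≠ 0)
    (P : R → Prop) [DecidablePred P] (hsimple : ∀ z, P z → p.IsRoot z → ¬p.derivative.IsRoot z) :
    Multiset.card (p.roots.filter P) = {z | P z ∧ p.IsRoot z}.ncard := by
  classical
  have hnodup : (p.roots.filter P).Nodup := by
    refine Multiset.nodup_iff_count_le_one.2 fun z => ?_
    rw [Multiset.count_filter]
    split_ifs with hz
    · rw [count_roots]
      by_contra h
      obtain ⟨hroot, hderiv⟩ := (one_lt_rootMultiplicity_iff_isRoot hp).1 (not_le.1 h)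
      exact hsimple z hz hroot hderiv
    · exact zero_le_one
  rw [← Multiset.toFinset_card_of_nodup hnodup, ← Set.ncard_coe_finset]
  congr 1
  ext z
  simp [mem_roots hp, and_comm]

theorem coeff_sum_range_C_mul_X_pow {R : Type*} [Semiring R] (a : ℕ → R) {n k : ℕ}
    (hk : k ≤ n) : (∑ i ∈ range (n + 1), C (a i) * X ^ i).coeff k = a k := by
  simp [Nat.lt_succ_of_le hk]

theorem natDegree_sum_range_C_mul_X_pow {R : Type*} [Semiring R] {a : ℕ → R} {n : ℕ}
    (han : a n ≠ 0) : (∑ i ∈ range (n + 1), C (a i) * X ^ i).natDegree = n :=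
  natDegree_eq_of_le_of_coeff_ne_zero
    (natDegree_le_iff_coeff_eq_zero.2 fun k hk => by
      simp [(by exact_mod_cast hk : n < k).not_ge])
    (by rwa [coeff_sum_range_C_mul_X_pow a le_rfl])

def IsSelfInversive (p : ℂ[X]) (ω : ℂ) : Prop :=
  ∀ k ≤ p.natDegree, p.coeff (p.natDegree - k) = ω * conj (p.coeff k)

namespace IsSelfInversive

variable {p : ℂ[X]} {ω : ℂ}

theorem coeff_zero_ne_zero (hp : p.IsSelfInversive ω) (hω : ω ≠ 0) (hp0 : p ≠ 0) :
    p.coeff 0 ≠ 0 := by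
  have := hp p.natDegree le_rfl
  rw [Nat.sub_self] at this
  rw [this]
  exact mul_ne_zero hω ((map_ne_zero_iff _ (RingHom.injective _)).2 (leadingCoeff_ne_zero.2 hp0))

theorem reverse_eq (hp : p.IsSelfInversive ω) : p.reverse = C ω * p.map (starRingEnd ℂ) := by
  ext k
  rw [coeff_reverse, coeff_C_mul, coeff_map]
  rcases le_or_gt k p.natDegree with hk | hk
  · rw [revAt_le hk, hp k hk]
  · rw [revAt_eq_self_of_lt hk, coeff_eq_zero_of_natDegree_lt hk, map_zero, mul_zero]

theorem card_roots_filter_norm_lt_one_eq (hp : p.IsSelfInversive ω) (hω : ω ≠ 0) (hp0 : p ≠ 0) :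
    Multiset.card (p.roots.filter (‖·‖ < 1)) = Multiset.card (p.roots.filter (1 < ‖·‖)) := by
  have h0 := hp.coeff_zero_ne_zero hω hp0
  have hmap : p.roots.map (·⁻¹) = p.roots.map conj := by
    rw [← roots_reverse h0, hp.reverse_eq, roots_C_mul _ hω,
      roots_map_of_injective_of_card_eq_natDegree (RingHom.injective _)
        IsAlgClosed.card_roots_eq_natDegree]
  have := congrArg (fun s => Multiset.card (s.filter (1 < ‖·‖))) hmap
  simp only [Multiset.filter_map, Multiset.card_map, Function.comp_def, Complex.norm_conj,
    norm_inv] at this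
  rw [← this]
  congr 1
  exact Multiset.filter_congr fun z hz =>
    (one_lt_inv₀ (norm_pos_iff.2 (ne_zero_of_mem_roots_of_coeff_zero_ne_zero h0 hz))).symm

theorem card_roots_filter_norm_eq_one (hp : p.IsSelfInversive ω) (hω : ‖ω‖ = 1) {l : ℕ}
    (hl : 2 * l < p.natDegree)
    (hdom : p.natDegree * ∑ k ∈ offDominant p.natDegree l, ‖p.coeff k‖
      < 2 * ‖p.coeff (p.natDegree - l)‖ * (p.natDegree - 2 * l)) :
    Multiset.card (p.roots.filter (‖·‖ = 1)) = p.natDegree - 2 * l := by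
  set n := p.natDegree
  have hp0 : p ≠ 0 := fun h => by simp [n, h] at hl
  obtain ⟨μ, hμ, hμω⟩ := exists_norm_eq_one_conj_eq_mul hω
  set c : ℕ → ℂ := fun k => μ * p.coeff k
  have hpn : ∀ k ≤ n, p.coeff (n - k) = ω * conj (p.coeff k) := hp
  have hc : ∀ k ≤ n, c (n - k) = conj (c k) := fun k hk => by
    simp only [c, hpn k hk, map_mul, hμω]
    ring
  have hcl : c l = conj (c (n - l)) := by rw [hc l (by omega), conj_conj]
  have hdom' : n * ∑ k ∈ offDominant n l, ‖c k‖ < 2 * ‖c (n - l)‖ * (n - 2 * l) := by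
    simpa only [c, norm_mul, hμ, one_mul] using hdom
  have hzero : ∀ t : ℝ, (trigPoly c n t).re = 0 ↔ p.IsRoot (exp ((2 * t : ℝ) * I)) := fun t => by
    have hreal := conj_eq_iff_re.1 (conj_trigPoly hc t)
    rw [← ofReal_eq_zero, hreal, trigPoly_eq_eval p μ le_rfl, IsRoot]
    simp [norm_pos_iff.1 (hμ ▸ one_pos : (0 : ℝ) < ‖μ‖), exp_ne_zero]
  have hsimple : ∀ z : ℂ, ‖z‖ = 1 → p.IsRoot z → ¬p.derivative.IsRoot z := by
    rintro z hz hroot hroot'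
    obtain ⟨t, -, rfl⟩ := exists_mem_Ico_exp_two_mul_I_eq hz 0
    refine re_trigPolyDeriv_ne_zero hl hcl hdom' ((hzero t).2 hroot) ?_
    rw [trigPolyDeriv_eq_zero_of_isRoot p μ le_rfl hroot hroot', zero_re]
  rw [card_roots_filter_eq_ncard hp0 _ hsimple,
    ncard_setOf_norm_eq_one_and _ (-arg (c (n - l)) / (n - 2 * l)),
    ← ncard_zeros_re_trigPoly hl hcl hdom']
  simp only [hzero]

theorem card_roots_filter_norm_lt_one_and_one_lt_norm (hp : p.IsSelfInversive ω) (hω : ‖ω‖ = 1)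
    {l : ℕ} (hl : 2 * l < p.natDegree)
    (hdom : p.natDegree * ∑ k ∈ offDominant p.natDegree l, ‖p.coeff k‖
      < 2 * ‖p.coeff (p.natDegree - l)‖ * (p.natDegree - 2 * l)) :
    Multiset.card (p.roots.filter (‖·‖ < 1)) = l ∧
      Multiset.card (p.roots.filter (1 < ‖·‖)) = l := by
  have hp0 : p ≠ 0 := fun h => by simp [h] at hl
  have hsymm := hp.card_roots_filter_norm_lt_one_eq (norm_pos_iff.1 (hω ▸ one_pos)) hp0
  have hcircle := hp.card_roots_filter_norm_eq_one hω hl hdom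
  have htotal := Multiset.card_filter_lt_add_card_filter_eq_add_card_filter_gt p.roots (‖·‖) 1
  rw [IsAlgClosed.card_roots_eq_natDegree] at htotal
  omega

end IsSelfInversive

end Polynomial

/-- If a self-inversive polynomial `p(z) = a₀ + a₁ z + ⋯ + aₙ zⁿ` of degree `n`
satisfies `|a_{n-l}| > (1/2)·(n/(n-2l))·∑_{k ≠ l, n-l} |a_k|` with `2l < n`, then `p`
has exactly `l` roots (with multiplicity) inside the open unit disk and exactly `l`
roots (with multiplicity) outside the closed unit disk. -/
theorem selfInversive_roots_inside_outside
    (n l : ℕ) (a : ℕ → ℂ) (ω : ℂ)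
    (hω : ‖ω‖ = 1)
    (han : a n ≠ 0)
    (hsi : ∀ k ≤ n, a (n - k) = ω * (starRingEnd ℂ) (a k))
    (hl : 2 * l < n)
    (hineq : ‖a (n - l)‖ >
      (1 / 2) * ((n : ℝ) / ((n : ℝ) - 2 * l)) *
        ∑ k ∈ (Finset.range (n + 1)).filter (fun k => k ≠ l ∧ k ≠ n - l),
          ‖a k‖) :
    (Multiset.card
        ((∑ k ∈ Finset.range (n + 1), Polynomial.C (a k) * Polynomial.X ^ k).roots.filter
          (fun z => ‖z‖ < 1)) = l)
      ∧
    (Multiset.card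
        ((∑ k ∈ Finset.range (n + 1), Polynomial.C (a k) * Polynomial.X ^ k).roots.filter
          (fun z => 1 < ‖z‖)) = l) := by
  set p := ∑ k ∈ Finset.range (n + 1), C (a k) * X ^ k
  have hcoeff : ∀ k ≤ n, p.coeff k = a k := fun k hk => coeff_sum_range_C_mul_X_pow a hk
  have hdeg : p.natDegree = n := natDegree_sum_range_C_mul_X_pow han
  have hp : p.IsSelfInversive ω := fun k hk => by
    rw [hdeg] at hk ⊢
    rw [hcoeff _ (Nat.sub_le n k), hcoeff k hk, hsi k hk]
  have hS : ∑ k ∈ offDominant n l, ‖p.coeff k‖ = ∑ k ∈ offDominant n l, ‖a k‖ :=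
    sum_congr rfl fun k hk => by
      rw [hcoeff k (le_of_mem_offDominant hk)]
  have hM : (0 : ℝ) < n - 2 * l := by
    have : (2 * l : ℝ) < n := by exact_mod_cast hl
    linarith
  refine hp.card_roots_filter_norm_lt_one_and_one_lt_norm hω (hdeg ▸ hl) ?_
  rw [hdeg, hS, hcoeff _ (Nat.sub_le n l)]
  calc (n : ℝ) * ∑ k ∈ offDominant n l, ‖a k‖
      = 2 * (n - 2 * l) * ((1 / 2) * (n / (n - 2 * l)) * ∑ k ∈ offDominant n l, ‖a k‖) := by
        field_simp
    _ < 2 * (n - 2 * l) * ‖a (n - l)‖ := by gcongr; exact hineq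
    _ = 2 * ‖a (n - l)‖ * (n - 2 * l) := by ring
end

section
/- Let p(z) = a_0 + a_1 z + ... + a_n z^n be a self-inversive polynomial of degree n and let l be a natural number with 2l < n satisfying |a_{n-l}| > (1/2)·(n/(n-2l))·Σ_{k=0, k∉{l, n-l}}^{n} |a_k|. Then the polynomial q(z) = Σ_{k=0}^{n-1} (n-k)·conj(a_{n-k})·z^k (that is, q(z) = z^{n-1}·conj(p')(1/z), where p' is the formal derivative of p) has exactly l roots, counted with multiplicity, in the open unit disk {z ∈ ℂ : |z| < 1}. -/
/-!
On the unit circle the coefficient `(n - l) conj(a_{n-l})` of `z^l` dominates `q`. Indeed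
`|a_{n-k}| = |a_k|`, so the moduli of the other coefficients sum to
`l |a_{n-l}| + ∑_{k ≠ l, n-l} (n - k) |a_k|`, and on an index set invariant under `k ↦ n - k`
the weights `n - k` average to `n / 2`; the hypothesis says exactly that the result is less than
`(n - l) |a_{n-l}|`. Rouché's theorem against the monomial then gives `l` roots in the disk. For
polynomials Rouché follows from the argument principle, i.e. from `q'/q = ∑_w 1 / (z - w)` over
the roots `w` of `q`.
-/

open Polynomial Finset
open Complex Metric Real

theorem circleIntegral_sub_inv_of_notMem_closedBall {c w : ℂ} {R : ℝ} (hR : 0 ≤ R)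
    (hw : w ∉ closedBall c R) : (∮ z in C(c, R), (z - w)⁻¹) = 0 := by
  have hne : ∀ z ∈ closedBall c R, z - w ≠ 0 := fun z hz h => hw (sub_eq_zero.1 h ▸ hz)
  refine circleIntegral_eq_zero_of_differentiable_on_off_countable hR Set.countable_empty
    ((continuousOn_id.sub continuousOn_const).inv₀ hne) fun z hz => ?_
  exact (differentiableAt_id.sub_const w).inv (hne z (ball_subset_closedBall hz.1))

theorem continuousOn_one_div_sub {w : ℂ} {t : Set ℂ} (hw : w ∉ t) :
    ContinuousOn (fun z => 1 / (z - w)) t :=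
  continuousOn_const.div (continuousOn_id.sub continuousOn_const)
    fun _ hz h => hw (sub_eq_zero.1 h ▸ hz)

theorem circleIntegral_multisetSum_one_div_sub {c : ℂ} {R : ℝ} (hR : 0 ≤ R) {s : Multiset ℂ}
    (hs : ∀ w ∈ s, w ∉ sphere c R) :
    (∮ z in C(c, R), (s.map fun w => 1 / (z - w)).sum) =
      2 * π * I * Multiset.card (s.filter fun w => dist w c < R) := by
  induction s using Multiset.induction with
  | empty => simp [circleIntegral]
  | cons w s ih =>
    have hw := hs w (Multiset.mem_cons_self w s)
    have hs' := fun v hv => hs v (Multiset.mem_cons_of_mem hv)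
    have hint_s : CircleIntegrable (fun z => (s.map fun v => 1 / (z - v)).sum) c R :=
      (continuousOn_multiset_sum s fun v hv =>
        continuousOn_one_div_sub (hs' v hv)).circleIntegrable hR
    simp only [Multiset.map_cons, Multiset.sum_cons]
    rw [circleIntegral.integral_add ((continuousOn_one_div_sub hw).circleIntegrable hR) hint_s,
      ih hs', Multiset.filter_cons]
    simp only [one_div]
    by_cases hwc : dist w c < R
    · rw [circleIntegral.integral_sub_inv_of_mem_ball hwc]
      simp [hwc]
      ring
    · have hw' : w ∉ closedBall c R := fun h =>
        hw (mem_sphere.2 ((mem_closedBall.1 h).antisymm (not_lt.1 hwc)))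
      rw [circleIntegral_sub_inv_of_notMem_closedBall hR hw']
      simp [hwc]

namespace Polynomial

theorem circleIntegral_eval_derivative_div_eval {q : ℂ[X]} {c : ℂ} {R : ℝ} (hR : 0 ≤ R)
    (hq : ∀ z ∈ sphere c R, q.eval z ≠ 0) :
    (∮ z in C(c, R), q.derivative.eval z / q.eval z) =
      2 * π * I * Multiset.card (q.roots.filter fun w => dist w c < R) := by
  rw [circleIntegral.integral_congr hR fun z hz =>
    (IsAlgClosed.splits q).eval_derivative_div_eval_of_ne_zero (hq z hz)]
  exact circleIntegral_multisetSum_one_div_sub hR fun w hw hws =>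
    hq w hws (isRoot_of_mem_roots hw)

theorem continuousOn_eval_derivative_div_eval {q : ℂ[X]} {t : Set ℂ}
    (hq : ∀ z ∈ t, q.eval z ≠ 0) : ContinuousOn (fun z => q.derivative.eval z / q.eval z) t :=
  q.derivative.continuousOn.div q.continuousOn hq

theorem hasDerivAt_log_eval_div_eval {p q : ℂ[X]} {z : ℂ} (hp : p.eval z ≠ 0) (hq : q.eval z ≠ 0)
    (hqp : q.eval z / p.eval z ∈ slitPlane) :
    HasDerivAt (fun z => log (q.eval z / p.eval z))
      (q.derivative.eval z / q.eval z - p.derivative.eval z / p.eval z) z := by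
  refine (((q.hasDerivAt z).div (p.hasDerivAt z) hp).clog hqp).congr_deriv ?_
  simp only [Pi.div_apply]
  field_simp

theorem card_roots_filter_dist_lt_eq_of_norm_sub_lt {p q : ℂ[X]} {c : ℂ} {R : ℝ} (hR : 0 ≤ R)
    (h : ∀ z ∈ sphere c R, ‖q.eval z - p.eval z‖ < ‖p.eval z‖) :
    Multiset.card (q.roots.filter fun w => dist w c < R) =
      Multiset.card (p.roots.filter fun w => dist w c < R) := by
  have hp : ∀ z ∈ sphere c R, p.eval z ≠ 0 := fun z hz h0 => by
    simpa [h0] using (norm_nonneg _).trans_lt (h z hz)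
  have hq : ∀ z ∈ sphere c R, q.eval z ≠ 0 := fun z hz h0 => by
    simpa [h0] using h z hz
  -- `q / p` maps the circle into the disk `ball 1 1 ⊆ slitPlane`, so `log (q / p)` is a
  -- primitive of `q'/q - p'/p` there.
  have hslit : ∀ z ∈ sphere c R, q.eval z / p.eval z ∈ slitPlane := fun z hz => by
    refine ball_one_subset_slitPlane (mem_ball_iff_norm.2 ?_)
    rw [div_sub_one (hp z hz), norm_div, div_lt_one (norm_pos_iff.2 (hp z hz))]
    exact h z hz
  have hzero : (∮ z in C(c, R), (q.derivative.eval z / q.eval z - p.derivative.eval z / p.eval z))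
      = 0 := circleIntegral.integral_eq_zero_of_hasDerivWithinAt hR fun z hz =>
    (hasDerivAt_log_eval_div_eval (hp z hz) (hq z hz) (hslit z hz)).hasDerivWithinAt
  rw [circleIntegral.integral_sub ((continuousOn_eval_derivative_div_eval hq).circleIntegrable hR)
    ((continuousOn_eval_derivative_div_eval hp).circleIntegrable hR),
    circleIntegral_eval_derivative_div_eval hR hq, circleIntegral_eval_derivative_div_eval hR hp,
    sub_eq_zero] at hzero
  exact_mod_cast mul_left_cancel₀ two_pi_I_ne_zero hzero

theorem card_roots_filter_norm_lt_one_of_dominant_coeff {s : Finset ℕ} {b : ℕ → ℂ} {l : ℕ}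
    (hl : l ∈ s) (hdom : ∑ k ∈ s.erase l, ‖b k‖ < ‖b l‖) :
    Multiset.card ((∑ k ∈ s, C (b k) * X ^ k).roots.filter fun z => ‖z‖ < 1) = l := by
  have hbl : b l ≠ 0 := norm_pos_iff.1 ((sum_nonneg fun k _ => norm_nonneg (b k)).trans_lt hdom)
  have hrouche := card_roots_filter_dist_lt_eq_of_norm_sub_lt (p := C (b l) * X ^ l) (c := 0)
    zero_le_one fun z hz => by
      have hz : ‖z‖ = 1 := by simpa using hz
      calc ‖(∑ k ∈ s, C (b k) * X ^ k).eval z - (C (b l) * X ^ l).eval z‖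
          = ‖∑ k ∈ s.erase l, b k * z ^ k‖ := by
            simp [eval_finsetSum, ← add_sum_erase s _ hl]
        _ ≤ ∑ k ∈ s.erase l, ‖b k‖ := (norm_sum_le _ _).trans_eq (by simp [hz])
        _ < ‖(C (b l) * X ^ l).eval z‖ := by simpa [hz] using hdom
  simpa [roots_C_mul_X_pow hbl, Multiset.filter_nsmul, Multiset.filter_singleton] using hrouche

end Polynomial

theorem sum_tsub_mul_eq_half_mul_sum {n : ℕ} {s : Finset ℕ} (hs : ∀ k ∈ s, k ≤ n ∧ n - k ∈ s)
    {f : ℕ → ℝ} (hf : ∀ k ≤ n, f (n - k) = f k) :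
    ∑ k ∈ s, ((n - k : ℕ) : ℝ) * f k = n / 2 * ∑ k ∈ s, f k := by
  have hreflect : ∑ k ∈ s, ((n - k : ℕ) : ℝ) * f k = ∑ k ∈ s, (k : ℝ) * f k :=
    sum_nbij' (n - ·) (n - ·) (fun k hk => (hs k hk).2) (fun k hk => (hs k hk).2)
      (fun k hk => Nat.sub_sub_self (hs k hk).1) (fun k hk => Nat.sub_sub_self (hs k hk).1)
      fun k hk => by rw [hf k (hs k hk).1]
  have htotal : ∑ k ∈ s, ((n - k : ℕ) : ℝ) * f k + ∑ k ∈ s, (k : ℝ) * f k = n * ∑ k ∈ s, f k := by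
    rw [← sum_add_distrib, mul_sum]
    refine sum_congr rfl fun k hk => ?_
    rw [Nat.cast_sub (hs k hk).1]
    ring
  linarith

theorem sum_erase_tsub_mul_lt {n l : ℕ} {f : ℕ → ℝ} (hf : ∀ k ≤ n, f (n - k) = f k)
    (hl : 2 * l < n)
    (hineq : f (n - l) > (1 / 2) * ((n : ℝ) / ((n : ℝ) - 2 * l)) *
      ∑ k ∈ (range (n + 1)).filter (fun k => k ≠ l ∧ k ≠ n - l), f k) :
    ∑ k ∈ (range n).erase l, ((n - k : ℕ) : ℝ) * f (n - k) < ((n - l : ℕ) : ℝ) * f (n - l) := by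
  set S := (range (n + 1)).filter (fun k => k ≠ l ∧ k ≠ n - l)
  have hS : ∀ k ∈ S, k ≤ n ∧ n - k ∈ S := fun k hk => by
    simp only [S, mem_filter, mem_range] at hk ⊢
    omega
  have hsplit : ∑ k ∈ (range n).erase l, ((n - k : ℕ) : ℝ) * f (n - k) =
      l * f (n - l) + n / 2 * ∑ k ∈ S, f k :=
    calc ∑ k ∈ (range n).erase l, ((n - k : ℕ) : ℝ) * f (n - k)
        = ∑ k ∈ (range (n + 1)).erase l, ((n - k : ℕ) : ℝ) * f k := by
          refine sum_subset_zero_on_sdiff (erase_subset_erase _ (range_subset_range.2 n.le_succ))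
            (fun k hk => ?_) fun k hk => ?_
          · simp only [mem_sdiff, mem_erase, mem_range] at hk
            simp [show k = n by omega]
          · simp only [mem_erase, mem_range] at hk
            rw [hf k (by omega)]
      _ = ((n - (n - l) : ℕ) : ℝ) * f (n - l) + ∑ k ∈ S, ((n - k : ℕ) : ℝ) * f k := by
          rw [← add_sum_erase _ _ (by simp only [mem_erase, mem_range]; omega : n - l ∈ _)]
          congr 2
          ext k
          simp only [S, mem_erase, mem_filter, mem_range]
          omega
      _ = l * f (n - l) + n / 2 * ∑ k ∈ S, f k := by
          rw [Nat.sub_sub_self (by omega), sum_tsub_mul_eq_half_mul_sum hS hf]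
  have hpos : (0 : ℝ) < n - 2 * l := by
    have : (2 * l : ℝ) < n := by exact_mod_cast hl
    linarith
  have hmain : n / 2 * ∑ k ∈ S, f k < (n - 2 * l) * f (n - l) :=
    calc n / 2 * ∑ k ∈ S, f k = (n - 2 * l) * (1 / 2 * (n / (n - 2 * l)) * ∑ k ∈ S, f k) := by
          field_simp
      _ < (n - 2 * l) * f (n - l) := mul_lt_mul_of_pos_left hineq hpos
  rw [hsplit, Nat.cast_sub (by omega)]
  linarith

theorem selfInversive_cohn_polynomial_roots_inside_general
    (n l : ℕ) (a : ℕ → ℂ) (ω : ℂ)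
    (hω : ‖ω‖ = 1)
    (hsi : ∀ k ≤ n, a (n - k) = ω * (starRingEnd ℂ) (a k))
    (hl : 2 * l < n)
    (hineq : ‖a (n - l)‖ >
      (1 / 2) * ((n : ℝ) / ((n : ℝ) - 2 * l)) *
        ∑ k ∈ (Finset.range (n + 1)).filter (fun k => k ≠ l ∧ k ≠ n - l),
          ‖a k‖) :
    Multiset.card
      ((∑ k ∈ Finset.range n,
          Polynomial.C (((n - k : ℕ) : ℂ) * (starRingEnd ℂ) (a (n - k))) *
            Polynomial.X ^ k).roots.filter
        (fun z => ‖z‖ < 1)) = l := by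
  have hsym : ∀ k ≤ n, ‖a (n - k)‖ = ‖a k‖ := fun k hk => by
    rw [hsi k hk, norm_mul, hω, one_mul, Complex.norm_conj]
  refine card_roots_filter_norm_lt_one_of_dominant_coeff (mem_range.2 (by omega)) ?_
  simpa [norm_mul] using sum_erase_tsub_mul_lt hsym hl hineq

/-- If a self-inversive polynomial `p(z) = a₀ + a₁ z + ⋯ + aₙ zⁿ` of degree `n`
satisfies `|a_{n-l}| > (1/2)·(n/(n-2l))·∑_{k ≠ l, n-l} |a_k|` with `2l < n`, then the
polynomial `q(z) = ∑_{k=0}^{n-1} (n-k)·conj(a_{n-k})·z^k` (i.e. `z^{n-1}·conj(p')(1/z)`)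
has exactly `l` roots, counted with multiplicity, in the open unit disk. -/
theorem selfInversive_cohn_polynomial_roots_inside
    (n l : ℕ) (a : ℕ → ℂ) (ω : ℂ)
    (hω : ‖ω‖ = 1)
    (han : a n ≠ 0)
    (hsi : ∀ k ≤ n, a (n - k) = ω * (starRingEnd ℂ) (a k))
    (hl : 2 * l < n)
    (hineq : ‖a (n - l)‖ >
      (1 / 2) * ((n : ℝ) / ((n : ℝ) - 2 * l)) *
        ∑ k ∈ (Finset.range (n + 1)).filter (fun k => k ≠ l ∧ k ≠ n - l),
          ‖a k‖) :
    Multiset.card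
      ((∑ k ∈ Finset.range n,
          Polynomial.C (((n - k : ℕ) : ℂ) * (starRingEnd ℂ) (a (n - k))) *
            Polynomial.X ^ k).roots.filter
        (fun z => ‖z‖ < 1)) = l :=
  selfInversive_cohn_polynomial_roots_inside_general n l a ω hω hsi hl hineq
end

section
/- Let p(z) = a_0 + a_1 z + ... + a_n z^n be a self-inversive polynomial of degree n and let l be a natural number with 2l < n. If |a_{n-l}| > (1/2)·Σ_{k=0, k∉{l, n-l}}^{n} |a_k|, then p has at least n-2l distinct roots on the complex unit circle U. -/
/-!
Pick `c` on the unit circle with `c² ω = 1`. Then `b_k = c a_k` satisfies `b_{n-k} = conj b_k`,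
so `e^{-inθ/2} c p(e^{iθ}) = ∑ b_k e^{i(k - n/2)θ}` is real for real `θ`: its terms `k` and
`n - k` are conjugate. The terms `k = l` and `k = n - l` add up to
`2 |a_{n-l}| cos (φ + (n/2 - l) θ)`, which by hypothesis dominates the sum of all other terms.
Hence the real function alternates in sign at the `n - 2l + 1` consecutive points where this
cosine is `±1`; these points span exactly one period `2π` of `e^{iθ}`, and the intermediate value
theorem yields `n - 2l` zeros in it, i.e. `n - 2l` distinct roots `e^{iθ}` of `p`.
-/

open Polynomial Finset Real ComplexConjugate

theorem exists_conj_eq_mul_of_norm_eq_one {ω : ℂ} (hω : ‖ω‖ = 1) :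
    ∃ c : Circle, conj (c : ℂ) = c * ω := by
  refine ⟨Circle.exp (-(Complex.arg ω / 2)), ?_⟩
  have hω' : (Circle.exp (Complex.arg ω) : ℂ) = ω := by
    rw [Circle.coe_exp]
    simpa [hω] using Complex.norm_mul_exp_arg_mul_I ω
  generalize Complex.arg ω = φ at hω' ⊢
  rw [← hω', ← Circle.coe_inv_eq_conj, ← Circle.coe_mul, ← Circle.exp_neg, ← Circle.exp_add]
  congr 2
  ring

theorem re_mul_circle_exp (z : ℂ) (t : ℝ) :
    (z * Circle.exp t).re = ‖z‖ * cos (Complex.arg z + t) := by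
  conv_lhs => rw [← Complex.norm_mul_exp_arg_mul_I z]
  rw [Circle.coe_exp, mul_assoc, ← Complex.exp_add, ← add_mul, ← Complex.ofReal_add,
    Complex.re_ofReal_mul, Complex.exp_ofReal_mul_I_re]

theorem sum_C_mul_X_pow_ne_zero {R : Type*} [Semiring R] {b : ℕ → R} {n i : ℕ} (hi : i ≤ n)
    (hb : b i ≠ 0) : ∑ k ∈ range (n + 1), C (b k) * X ^ k ≠ 0 := by
  intro h
  have := congrArg (coeff · i) h
  simp only [finsetSum_coeff, coeff_C_mul_X_pow, sum_ite_eq, mem_range, coeff_zero] at this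
  exact hb (by rwa [if_pos (by omega)] at this)

theorem exists_mem_Ioo_eq_zero_of_mul_neg {α : Type*} [ConditionallyCompleteLinearOrder α]
    [TopologicalSpace α] [OrderTopology α] [DenselyOrdered α] {f : α → ℝ} {a b : α}
    (hab : a ≤ b) (hf : ContinuousOn f (Set.Icc a b)) (h : f a * f b < 0) :
    ∃ x ∈ Set.Ioo a b, f x = 0 := by
  rcases lt_or_gt_of_ne (left_ne_zero_of_mul h.ne) with ha | ha
  · exact intermediate_value_Ioo hab hf ⟨ha, by nlinarith⟩
  · exact intermediate_value_Ioo' hab hf ⟨by nlinarith, ha⟩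

theorem exists_strictMono_zeros_of_alternating {f : ℝ → ℝ} (hf : Continuous f) {θ : ℕ → ℝ}
    (hθ : StrictMono θ) (h : ∀ j, 0 < (-1) ^ j * f (θ j)) :
    ∃ x : ℕ → ℝ, StrictMono x ∧ ∀ j, x j ∈ Set.Ioo (θ j) (θ (j + 1)) ∧ f (x j) = 0 := by
  have hzero : ∀ j, ∃ x ∈ Set.Ioo (θ j) (θ (j + 1)), f x = 0 := fun j =>
    exists_mem_Ioo_eq_zero_of_mul_neg (hθ j.lt_succ_self).le hf.continuousOn <| by
      have h₁ := h j
      have h₂ := h (j + 1)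
      rw [pow_succ] at h₂
      rcases neg_one_pow_eq_or ℝ j with hj | hj <;> rw [hj] at h₁ h₂ <;> nlinarith
  choose x hxθ hxf using hzero
  exact ⟨x, strictMono_nat_of_lt_succ fun j => (hxθ j).2.trans (hxθ (j + 1)).1,
    fun j => ⟨hxθ j, hxf j⟩⟩

theorem le_ncard_of_circle_exp_mem {s : Set ℂ} (hs : s.Finite) {x : ℕ → ℝ} (hx : StrictMono x)
    {m : ℕ} {t : ℝ} (hxt : ∀ j < m, x j ∈ Set.Ico t (t + 2 * π))
    (hxs : ∀ j < m, (Circle.exp (x j) : ℂ) ∈ s) : m ≤ s.ncard := by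
  rw [← Set.ncard_Iio_nat m]
  refine Set.ncard_le_ncard_of_injOn (fun j => (Circle.exp (x j) : ℂ)) hxs ?_ hs
  intro i hi j hj hij
  exact hx.injective <| Circle.exp_injOn_Ico (by linarith) (hxt i hi) (hxt j hj)
    (Circle.coe_injective hij)

/-- `e^{-inθ/2} p(e^{iθ})` for `p = ∑_{k ≤ n} b_k X^k`, written as a trigonometric sum. -/
noncomputable def centeredTrigPoly (b : ℕ → ℂ) (n : ℕ) (θ : ℝ) : ℂ :=
  ∑ k ∈ range (n + 1), b k * Circle.exp ((k - n / 2 : ℝ) * θ)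

section centeredTrigPoly

variable {b : ℕ → ℂ} {n : ℕ}

theorem continuous_centeredTrigPoly : Continuous (centeredTrigPoly b n) := by
  unfold centeredTrigPoly
  fun_prop

theorem centeredTrigPoly_eq_mul_eval (θ : ℝ) :
    centeredTrigPoly b n θ =
      Circle.exp (-(n / 2 * θ)) *
        (∑ k ∈ range (n + 1), C (b k) * X ^ k).eval (Circle.exp θ : ℂ) := by
  simp only [centeredTrigPoly, eval_finsetSum, eval_mul, eval_C, eval_pow, eval_X, mul_sum]
  refine sum_congr rfl fun k _ => ?_
  rw [show ((k : ℝ) - n / 2) * θ = -(n / 2 * θ) + k * θ by ring, Circle.exp_add,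
    Circle.exp_natCast_mul]
  push_cast
  ring

variable (hb : ∀ k ≤ n, b (n - k) = conj (b k))
include hb

theorem conj_centeredTrigPoly (θ : ℝ) :
    conj (centeredTrigPoly b n θ) = centeredTrigPoly b n θ := by
  rw [centeredTrigPoly, map_sum, ← sum_range_reflect]
  refine sum_congr rfl fun k hk => ?_
  have hk : k ≤ n := Nat.lt_succ_iff.mp (mem_range.mp hk)
  rw [Nat.add_sub_cancel, map_mul, ← Circle.coe_inv_eq_conj, ← Circle.exp_neg, hb k hk,
    Complex.conj_conj, Nat.cast_sub hk]
  congr 3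
  ring

theorem eval_circle_exp_eq_zero_of_re_centeredTrigPoly_eq_zero {θ : ℝ}
    (h : (centeredTrigPoly b n θ).re = 0) :
    (∑ k ∈ range (n + 1), C (b k) * X ^ k).eval (Circle.exp θ : ℂ) = 0 := by
  have h₀ : centeredTrigPoly b n θ = 0 := by
    rw [← Complex.conj_eq_iff_re.mp (conj_centeredTrigPoly hb θ), h, Complex.ofReal_zero]
  rw [centeredTrigPoly_eq_mul_eval] at h₀
  exact (mul_eq_zero.mp h₀).resolve_left (Circle.coe_ne_zero _)

theorem abs_re_centeredTrigPoly_sub_le {l : ℕ} (hln : l ≤ n) (hl : 2 * l ≠ n) (θ : ℝ) :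
    |(centeredTrigPoly b n θ).re -
        2 * ‖b (n - l)‖ * cos (Complex.arg (b (n - l)) + (n / 2 - l) * θ)| ≤
      ∑ k ∈ (range (n + 1)).filter (fun k => k ≠ l ∧ k ≠ n - l), ‖b k‖ := by
  classical
  have hpair : (range (n + 1)).filter (fun k => ¬(k ≠ l ∧ k ≠ n - l)) = {n - l, l} := by
    ext k
    simp only [mem_filter, mem_range, mem_insert, mem_singleton]
    omega
  have hnl_term : b (n - l) * Circle.exp ((↑(n - l) - n / 2 : ℝ) * θ) =
      b (n - l) * Circle.exp ((n / 2 - l : ℝ) * θ) := by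
    rw [Nat.cast_sub hln, show ((n : ℝ) - l - n / 2) * θ = (n / 2 - l) * θ by ring]
  have hl_term : b l * Circle.exp ((l - n / 2 : ℝ) * θ) =
      conj (b (n - l) * Circle.exp ((n / 2 - l : ℝ) * θ)) := by
    rw [map_mul (starRingEnd ℂ), ← Circle.coe_inv_eq_conj, ← Circle.exp_neg,
      ← hb (n - l) (by omega), Nat.sub_sub_self hln,
      show -((n / 2 - l : ℝ) * θ) = (l - n / 2) * θ by ring]
  rw [centeredTrigPoly, ← sum_filter_not_add_sum_filter _ (fun k => k ≠ l ∧ k ≠ n - l), hpair,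
    sum_pair (by omega), hnl_term, hl_term, Complex.add_re, Complex.add_re, Complex.conj_re,
    re_mul_circle_exp]
  calc _ = |(∑ k ∈ (range (n + 1)).filter (fun k => k ≠ l ∧ k ≠ n - l),
              b k * Circle.exp ((k - n / 2 : ℝ) * θ)).re| := by ring_nf
    _ ≤ ‖∑ k ∈ (range (n + 1)).filter (fun k => k ≠ l ∧ k ≠ n - l),
              b k * Circle.exp ((k - n / 2 : ℝ) * θ)‖ := Complex.abs_re_le_norm _
    _ ≤ _ := (norm_sum_le _ _).trans_eq <| by simp only [norm_mul, Circle.norm_coe, mul_one]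

variable {l : ℕ} (hl : 2 * l < n)
  (hdom : ∑ k ∈ (range (n + 1)).filter (fun k => k ≠ l ∧ k ≠ n - l), ‖b k‖ < 2 * ‖b (n - l)‖)
include hl hdom

/-- At these points the dominant pair `2 ‖b (n - l)‖ cos (arg b (n - l) + (n/2 - l) θ)`
equals `(-1)^j 2 ‖b (n - l)‖`. -/
theorem neg_one_pow_mul_re_centeredTrigPoly_pos (j : ℕ) :
    0 < (-1) ^ j *
      (centeredTrigPoly b n ((j * π - Complex.arg (b (n - l))) / (n / 2 - l))).re := by
  have hμ : (0 : ℝ) < n / 2 - l := by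
    have : (2 * l : ℝ) < n := by exact_mod_cast hl
    linarith
  have h := abs_le.mp <| abs_re_centeredTrigPoly_sub_le hb (l := l) (by omega) (by omega)
    ((j * π - Complex.arg (b (n - l))) / (n / 2 - l))
  rw [mul_div_cancel₀ _ hμ.ne', add_sub_cancel, cos_nat_mul_pi] at h
  rcases neg_one_pow_eq_or ℝ j with hj | hj <;> rw [hj] at h ⊢ <;> linarith [h.1, h.2]

theorem sub_two_mul_le_ncard_roots_of_conj_reciprocal :
    n - 2 * l ≤
      {z : ℂ | (∑ k ∈ range (n + 1), C (b k) * X ^ k).eval z = 0 ∧ ‖z‖ = 1}.ncard := by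
  set μ : ℝ := n / 2 - l
  have hμ : 0 < μ := by
    have : (2 * l : ℝ) < n := by exact_mod_cast hl
    simp only [μ]
    linarith
  set θ : ℕ → ℝ := fun j => (j * π - Complex.arg (b (n - l))) / μ
  have hθ : StrictMono θ := strictMono_nat_of_lt_succ fun j => by
    apply div_lt_div_of_pos_right _ hμ
    push_cast
    linarith [pi_pos]
  have hperiod : θ (n - 2 * l) = θ 0 + 2 * π := by
    have hm : ((n - 2 * l : ℕ) : ℝ) = 2 * μ := by
      simp only [μ]
      rw [Nat.cast_sub hl.le]
      push_cast
      ring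
    simp only [θ, hm]
    field_simp
    ring
  obtain ⟨x, hx, hxθ⟩ := exists_strictMono_zeros_of_alternating
    (Complex.continuous_re.comp continuous_centeredTrigPoly) hθ
    (neg_one_pow_mul_re_centeredTrigPoly_pos hb hl hdom)
  have hp : ∑ k ∈ range (n + 1), C (b k) * X ^ k ≠ 0 := by
    refine sum_C_mul_X_pow_ne_zero (i := n - l) (by omega) (norm_pos_iff.mp ?_)
    linarith [(sum_nonneg fun k _ => norm_nonneg (b k)).trans_lt hdom]
  refine le_ncard_of_circle_exp_mem ((finite_setOfPred_isRoot hp).subset fun z hz => hz.1) hx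
    (fun j hj => ⟨(hθ.monotone j.zero_le).trans (hxθ j).1.1.le, ?_⟩)
    fun j _ => ⟨eval_circle_exp_eq_zero_of_re_centeredTrigPoly_eq_zero hb (hxθ j).2,
      Circle.norm_coe _⟩
  exact hperiod ▸ (hxθ j).1.2.trans_le (hθ.monotone hj)

end centeredTrigPoly

theorem selfInversive_at_least_roots_on_unit_circle_general
    (n l : ℕ) (a : ℕ → ℂ) (ω : ℂ)
    (hω : ‖ω‖ = 1)
    (hsi : ∀ k ≤ n, a (n - k) = ω * (starRingEnd ℂ) (a k))
    (hl : 2 * l < n)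
    (hineq : ‖a (n - l)‖ >
      (1 / 2) *
        ∑ k ∈ (Finset.range (n + 1)).filter (fun k => k ≠ l ∧ k ≠ n - l),
          ‖a k‖) :
    n - 2 * l ≤
      {z : ℂ | (∑ k ∈ Finset.range (n + 1), Polynomial.C (a k) * Polynomial.X ^ k).eval z = 0
          ∧ ‖z‖ = 1}.ncard := by
  obtain ⟨c, hc⟩ := exists_conj_eq_mul_of_norm_eq_one hω
  have hb : ∀ k ≤ n, c * a (n - k) = conj (c * a k) := fun k hk => by
    rw [hsi k hk, map_mul, hc, mul_assoc]
  have key := sub_two_mul_le_ncard_roots_of_conj_reciprocal (b := fun k => c * a k) hb hl <| by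
    simp only [norm_mul, Circle.norm_coe, one_mul]
    linarith
  convert key using 4 with z
  simp [eval_finsetSum, mul_assoc, ← mul_sum]

/-- If a self-inversive polynomial `p(z) = a₀ + a₁ z + ⋯ + aₙ zⁿ` of degree `n`
satisfies the weaker condition `|a_{n-l}| > (1/2)·∑_{k ≠ l, n-l} |a_k|` with `2l < n`,
then `p` has at least `n - 2l` distinct roots on the complex unit circle. -/
theorem selfInversive_at_least_roots_on_unit_circle
    (n l : ℕ) (a : ℕ → ℂ) (ω : ℂ)
    (hω : ‖ω‖ = 1)
    (han : a n ≠ 0)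
    (hsi : ∀ k ≤ n, a (n - k) = ω * (starRingEnd ℂ) (a k))
    (hl : 2 * l < n)
    (hineq : ‖a (n - l)‖ >
      (1 / 2) *
        ∑ k ∈ (Finset.range (n + 1)).filter (fun k => k ≠ l ∧ k ≠ n - l),
          ‖a k‖) :
    n - 2 * l ≤
      {z : ℂ | (∑ k ∈ Finset.range (n + 1), Polynomial.C (a k) * Polynomial.X ^ k).eval z = 0
          ∧ ‖z‖ = 1}.ncard :=
  selfInversive_at_least_roots_on_unit_circle_general n l a ω hω hsi hl hineq
end

section
/- (Lakatos–Losonczi) Let p(z) = a_0 + a_1 z + ... + a_n z^n be a self-inversive polynomial of degree n ≥ 1. If |a_n| > (1/2)·Σ_{k=1}^{n-1} |a_k|, then all n roots of p lie on the complex unit circle U and all of them are simple. -/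
open Polynomial Finset
open Complex ComplexConjugate
open scoped Real

/-!
Multiplying the coefficients by `conj σ`, where `σ² = ω` and `‖σ‖ = 1`, changes neither the roots
nor the norms `‖a k‖` and makes the coefficients conjugate-reciprocal: `b (n - k) = conj (b k)`.
Then `Q(θ) = e^{-inθ/2} p(e^{iθ}) = ∑ b k e^{i(k - n/2)θ}` (`centeredSum`) is real. Its two
extreme terms add up to `2 ‖b n‖ cos(nθ/2 + arg (b n))`, which dominates the middle terms because
`∑_{0<k<n} ‖b k‖ < 2 ‖b n‖`; so `Q` alternates in sign at the `n + 1` points where this cosine is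
`±1`, and these span exactly one period. The intermediate value theorem gives `n` distinct roots on
the unit circle; as `p` has degree `n`, these are all its roots, and each is simple.
-/

lemma exists_mem_Ioo_eq_zero_of_alternating {f : ℝ → ℝ} (hf : Continuous f) {t : ℕ → ℝ}
    (ht : StrictMono t) (hsign : ∀ j, 0 < (-1) ^ j * f (t j)) (j : ℕ) :
    ∃ x ∈ Set.Ioo (t j) (t (j + 1)), f x = 0 := by
  have hlt : t j ≤ t (j + 1) := (ht j.lt_succ_self).le
  have h₀ := hsign j
  have h₁ := hsign (j + 1)
  rw [pow_succ] at h₁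
  rcases neg_one_pow_eq_or ℝ j with h | h <;> rw [h] at h₀ h₁
  · exact intermediate_value_Ioo' hlt hf.continuousOn ⟨by linarith, by linarith⟩
  · exact intermediate_value_Ioo hlt hf.continuousOn ⟨by linarith, by linarith⟩

lemma exists_norm_eq_one_conj_mul_eq_self {ω : ℂ} (hω : ‖ω‖ = 1) :
    ∃ σ : ℂ, ‖σ‖ = 1 ∧ conj σ * ω = σ := by
  refine ⟨exp ((arg ω / 2 : ℝ) * I), norm_exp_ofReal_mul_I _, ?_⟩
  nth_rewrite 2 [← norm_mul_exp_arg_mul_I ω]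
  rw [hω, ofReal_one, one_mul, ← exp_conj, ← Complex.exp_add]
  congr 1
  simp only [map_mul, conj_ofReal, conj_I]
  push_cast
  ring

lemma re_mul_exp_sub_arg (c : ℂ) (x : ℝ) :
    (c * exp ((x - arg c : ℝ) * I)).re = ‖c‖ * Real.cos x := by
  nth_rewrite 1 [← norm_mul_exp_arg_mul_I c]
  rw [mul_assoc, ← Complex.exp_add, re_ofReal_mul, ← exp_ofReal_mul_I_re]
  congr 3
  push_cast
  ring

lemma natDegree_sum_range_C_mul_X_pow_le {R : Type*} [Semiring R] (n : ℕ) (b : ℕ → R) :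
    (∑ k ∈ range (n + 1), C (b k) * X ^ k).natDegree ≤ n :=
  natDegree_sum_le_of_forall_le _ _ fun k hk =>
    (natDegree_C_mul_X_pow_le (b k) k).trans (Nat.lt_succ_iff.1 (mem_range.1 hk))

noncomputable def centeredSum (n : ℕ) (b : ℕ → ℂ) (θ : ℝ) : ℂ :=
  ∑ k ∈ range (n + 1), b k * exp (((k - n / 2 : ℝ) * θ : ℝ) * I)

section CenteredSum

variable {n : ℕ} {b : ℕ → ℂ}

lemma centeredSum_eq_exp_mul_eval (θ : ℝ) :
    centeredSum n b θ =
      exp ((-(n * θ / 2) : ℝ) * I) * (∑ k ∈ range (n + 1), C (b k) * X ^ k).eval (exp (θ * I)) := by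
  simp only [centeredSum, eval_finsetSum, eval_mul, eval_C, eval_pow, eval_X, mul_sum,
    ← Complex.exp_nat_mul]
  refine sum_congr rfl fun k _ => ?_
  rw [mul_left_comm, ← Complex.exp_add]
  congr 2
  push_cast
  ring

lemma continuous_centeredSum : Continuous (centeredSum n b) := by
  unfold centeredSum
  fun_prop

lemma conj_centeredSum (hb : ∀ k ≤ n, b (n - k) = conj (b k)) (θ : ℝ) :
    conj (centeredSum n b θ) = centeredSum n b θ := by
  rw [centeredSum, map_sum]
  conv_rhs => rw [← sum_range_reflect]
  refine sum_congr rfl fun k hk => ?_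
  have hk : k ≤ n := Nat.lt_succ_iff.1 (mem_range.1 hk)
  rw [Nat.add_sub_cancel, hb k hk, map_mul, ← exp_conj, Nat.cast_sub hk]
  congr 2
  simp only [map_mul, conj_ofReal, conj_I]
  push_cast
  ring

lemma abs_re_centeredSum_sub_le (hn : 0 < n) (hb : ∀ k ≤ n, b (n - k) = conj (b k)) (θ : ℝ) :
    |(centeredSum n b θ).re - 2 * (b n * exp ((n * θ / 2 : ℝ) * I)).re| ≤
      ∑ k ∈ Icc 1 (n - 1), ‖b k‖ := by
  set w := b n * exp ((n * θ / 2 : ℝ) * I)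
  have hsplit : range (n + 1) = insert 0 (insert n (Icc 1 (n - 1))) := by
    ext k; simp only [mem_range, mem_insert, mem_Icc]; omega
  have h0 : 0 ∉ insert n (Icc 1 (n - 1)) := by simp only [mem_insert, mem_Icc]; omega
  have hn' : n ∉ Icc 1 (n - 1) := by simp only [mem_Icc]; omega
  have hlast : b n * exp (((n - n / 2 : ℝ) * θ : ℝ) * I) = w := by
    simp only [w]; congr 4; ring
  have hfirst : b 0 * exp (((0 - n / 2 : ℝ) * θ : ℝ) * I) = conj w := by
    rw [map_mul, ← hb n le_rfl, Nat.sub_self, ← exp_conj]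
    congr 2
    simp only [map_mul, conj_ofReal, conj_I]
    push_cast
    ring
  rw [centeredSum, hsplit, sum_insert h0, sum_insert hn', Nat.cast_zero, hfirst, hlast,
    add_re, add_re, conj_re]
  calc _ = |(∑ k ∈ Icc 1 (n - 1), b k * exp (((k - n / 2 : ℝ) * θ : ℝ) * I)).re| := by
          congr 1; ring
    _ ≤ ‖∑ k ∈ Icc 1 (n - 1), b k * exp (((k - n / 2 : ℝ) * θ : ℝ) * I)‖ := abs_re_le_norm _
    _ ≤ ∑ k ∈ Icc 1 (n - 1), ‖b k‖ := by
      refine (norm_sum_le _ _).trans_eq (sum_congr rfl fun k _ => ?_)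
      rw [norm_mul, norm_exp_ofReal_mul_I, mul_one]

lemma neg_one_pow_mul_re_centeredSum_pos (hn : 0 < n) (hb : ∀ k ≤ n, b (n - k) = conj (b k))
    (hS : ∑ k ∈ Icc 1 (n - 1), ‖b k‖ < 2 * ‖b n‖) (j : ℕ) :
    0 < (-1) ^ j * (centeredSum n b ((2 * π * j - 2 * arg (b n)) / n)).re := by
  set θ := (2 * π * j - 2 * arg (b n)) / n
  have hθ : (n * θ / 2 : ℝ) = j * π - arg (b n) := by
    simp only [θ]; field_simp
  have hpeak : (b n * exp ((n * θ / 2 : ℝ) * I)).re = ‖b n‖ * (-1) ^ j := by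
    rw [hθ, re_mul_exp_sub_arg, Real.cos_nat_mul_pi]
  have hdev := abs_re_centeredSum_sub_le hn hb θ
  rw [hpeak] at hdev
  set d := (centeredSum n b θ).re - 2 * (‖b n‖ * (-1) ^ j)
  have hsq : ((-1 : ℝ) ^ j) ^ 2 = 1 := by rw [← pow_mul, mul_comm, pow_mul]; simp
  have hd : |(-1) ^ j * d| = |d| := by rw [abs_mul, abs_neg_one_pow, one_mul]
  have : (-1) ^ j * (centeredSum n b θ).re = (-1) ^ j * d + 2 * ‖b n‖ := by
    linear_combination (2 * ‖b n‖) * hsq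
  linarith [neg_abs_le ((-1) ^ j * d)]

lemma eval_eq_zero_of_re_centeredSum_eq_zero (hb : ∀ k ≤ n, b (n - k) = conj (b k)) {θ : ℝ}
    (hθ : (centeredSum n b θ).re = 0) :
    (∑ k ∈ range (n + 1), C (b k) * X ^ k).eval (exp (θ * I)) = 0 := by
  have hzero : centeredSum n b θ = 0 :=
    Complex.ext hθ (conj_eq_iff_im.1 (conj_centeredSum hb θ))
  rw [centeredSum_eq_exp_mul_eval] at hzero
  exact (mul_eq_zero.1 hzero).resolve_left (Complex.exp_ne_zero _)

end CenteredSum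

section ConjReciprocal

variable {n : ℕ} {b : ℕ → ℂ}

theorem exists_finset_card_eq_roots_on_circle (hn : 0 < n) (hb : ∀ k ≤ n, b (n - k) = conj (b k))
    (hS : ∑ k ∈ Icc 1 (n - 1), ‖b k‖ < 2 * ‖b n‖) :
    ∃ s : Finset ℂ, s.card = n ∧
      ∀ z ∈ s, ‖z‖ = 1 ∧ (∑ k ∈ range (n + 1), C (b k) * X ^ k).IsRoot z := by
  set t : ℕ → ℝ := fun j => (2 * π * j - 2 * arg (b n)) / n
  have ht : StrictMono t := fun i j hij => by
    have : (i : ℝ) < j := by exact_mod_cast hij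
    simp only [t]; gcongr
  have htn : t n = t 0 + 2 * π := by simp only [t]; field_simp; ring
  choose r hr hr0 using exists_mem_Ioo_eq_zero_of_alternating
    (continuous_re.comp continuous_centeredSum) ht (neg_one_pow_mul_re_centeredSum_pos hn hb hS)
  have hr_mono : StrictMono r :=
    strictMono_nat_of_lt_succ fun j => (hr j).2.trans (hr (j + 1)).1
  have hr_mem : ∀ j < n, r j ∈ Set.Ico (t 0) (t 0 + 2 * π) := fun j hj =>
    ⟨(ht.monotone j.zero_le).trans (hr j).1.le, htn ▸ (hr j).2.trans_le (ht.monotone hj)⟩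
  have hinj : Set.InjOn (fun j => exp (r j * I)) (range n) := fun i hi j hj hij =>
    hr_mono.injective <| Circle.exp_injOn_Ico (by simp) (hr_mem i (mem_range.1 hi))
      (hr_mem j (mem_range.1 hj)) (Circle.ext hij)
  refine ⟨(range n).image fun j => exp (r j * I), by rw [card_image_of_injOn hinj, card_range], ?_⟩
  simpa [norm_exp_ofReal_mul_I] using fun j _ => eval_eq_zero_of_re_centeredSum_eq_zero hb (hr0 j)

theorem norm_eq_one_and_rootMultiplicity_eq_one_of_conj_reciprocal (hn : 0 < n)
    (hb : ∀ k ≤ n, b (n - k) = conj (b k)) (hS : ∑ k ∈ Icc 1 (n - 1), ‖b k‖ < 2 * ‖b n‖) {z : ℂ}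
    (hz : (∑ k ∈ range (n + 1), C (b k) * X ^ k).IsRoot z) :
    ‖z‖ = 1 ∧ rootMultiplicity z (∑ k ∈ range (n + 1), C (b k) * X ^ k) = 1 := by
  obtain ⟨s, hcard, hs⟩ := exists_finset_card_eq_roots_on_circle hn hb hS
  have hbn : b n ≠ 0 := norm_pos_iff.1 <| by
    linarith [sum_nonneg fun k (_ : k ∈ Icc 1 (n - 1)) => norm_nonneg (b k)]
  have hp : ∑ k ∈ range (n + 1), C (b k) * X ^ k ≠ 0 := fun h =>
    hbn (by simpa using congr_arg (coeff · n) h)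
  have hroots := roots_eq_of_natDegree_le_card_of_ne_zero (fun z hz => (hs z hz).2)
    (hcard ▸ natDegree_sum_range_C_mul_X_pow_le n b) hp
  have hzs : z ∈ s := by rw [← mem_val, ← hroots]; exact (mem_roots hp).2 hz
  exact ⟨(hs z hzs).1, by rw [← count_roots, hroots, Multiset.count_eq_one_of_mem s.nodup hzs]⟩

end ConjReciprocal

theorem lakatos_losonczi_general
    (n : ℕ) (hn : 1 ≤ n) (a : ℕ → ℂ) (ω : ℂ)
    (hω : ‖ω‖ = 1)
    (hsi : ∀ k ≤ n, a (n - k) = ω * (starRingEnd ℂ) (a k))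
    (hineq : ‖a n‖ >
      (1 / 2) * ∑ k ∈ Finset.Icc 1 (n - 1), ‖a k‖) :
    ∀ z : ℂ,
      (∑ k ∈ Finset.range (n + 1), Polynomial.C (a k) * Polynomial.X ^ k).eval z = 0 →
      ‖z‖ = 1 ∧
        Polynomial.rootMultiplicity z
          (∑ k ∈ Finset.range (n + 1), Polynomial.C (a k) * Polynomial.X ^ k) = 1 := by
  intro z hz
  obtain ⟨σ, hσ, hσω⟩ := exists_norm_eq_one_conj_mul_eq_self hω
  have hσ0 : conj σ ≠ 0 := by simp [← norm_pos_iff, hσ]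
  have hrot : C (conj σ) * ∑ k ∈ range (n + 1), C (a k) * X ^ k =
      ∑ k ∈ range (n + 1), C (conj σ * a k) * X ^ k := by
    simp only [mul_sum, C_mul, mul_assoc]
  obtain ⟨hz₁, hmult⟩ :=
    norm_eq_one_and_rootMultiplicity_eq_one_of_conj_reciprocal (b := fun k => conj σ * a k) hn
    (fun k hk => by rw [hsi k hk, ← mul_assoc, hσω, map_mul, conj_conj])
    (by simp only [norm_mul, norm_conj, hσ, one_mul]; linarith)
    (by rw [← hrot, IsRoot, eval_mul, hz, mul_zero])
  refine ⟨hz₁, ?_⟩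
  rw [← count_roots, ← roots_C_mul _ hσ0, hrot, count_roots, hmult]

/-- (Lakatos–Losonczi) If a self-inversive polynomial `p(z) = a₀ + a₁ z + ⋯ + aₙ zⁿ`
of degree `n ≥ 1` satisfies `|aₙ| > (1/2)·∑_{k=1}^{n-1} |a_k|`, then all roots of `p`
lie on the complex unit circle and all are simple. -/
theorem lakatos_losonczi
    (n : ℕ) (hn : 1 ≤ n) (a : ℕ → ℂ) (ω : ℂ)
    (hω : ‖ω‖ = 1)
    (han : a n ≠ 0)
    (hsi : ∀ k ≤ n, a (n - k) = ω * (starRingEnd ℂ) (a k))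
    (hineq : ‖a n‖ >
      (1 / 2) * ∑ k ∈ Finset.Icc 1 (n - 1), ‖a k‖) :
    ∀ z : ℂ,
      (∑ k ∈ Finset.range (n + 1), Polynomial.C (a k) * Polynomial.X ^ k).eval z = 0 →
      ‖z‖ = 1 ∧
        Polynomial.rootMultiplicity z
          (∑ k ∈ Finset.range (n + 1), Polynomial.C (a k) * Polynomial.X ^ k) = 1 :=
  lakatos_losonczi_general n hn a ω hω hsi hineq
end

section
/- The polynomial h(z) = (1+i)z^4 − 2i·z^3 − 2z + (1+i) is a self-inversive polynomial of degree 4 (with ω = i), its coefficient a_3 = −2i satisfies the inequality |a_3| > (1/2)·(|a_0| + |a_2| + |a_4|), and nevertheless all four roots of h lie on the complex unit circle U (i.e., every root z of h satisfies |z| = 1). -/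
/-!
`h` factors as `(1 + i)(z² − i)(z − 1)(z − i)`, and every root of each factor has modulus one.
-/

open Polynomial Complex ComplexConjugate

lemma norm_eq_one_of_pow_eq {𝕜 : Type*} [NormedDivisionRing 𝕜] {z w : 𝕜} {n : ℕ} (hn : n ≠ 0)
    (h : z ^ n = w) (hw : ‖w‖ = 1) : ‖z‖ = 1 := by
  rw [← pow_eq_one_iff_of_nonneg (norm_nonneg z) hn, ← norm_pow, h, hw]

lemma norm_one_add_I : ‖1 + I‖ = √2 := by
  rw [norm_def, normSq_apply]
  norm_num

lemma one_add_I_ne_zero : (1 : ℂ) + I ≠ 0 := by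
  simp [← norm_ne_zero_iff, norm_one_add_I]

noncomputable def selfInversiveQuartic : ℂ[X] :=
  C (1 + I) * X ^ 4 - C (2 * I) * X ^ 3 - C 2 * X + C (1 + I)

namespace selfInversiveQuartic

lemma natDegree_eq : selfInversiveQuartic.natDegree = 4 := by
  unfold selfInversiveQuartic
  compute_degree!
  exact one_add_I_ne_zero

lemma coeff_eq (n : ℕ) :
    selfInversiveQuartic.coeff n = (if n = 4 then 1 + I else 0) - (if n = 3 then 2 * I else 0)
      - (if n = 1 then 2 else 0) + (if n = 0 then 1 + I else 0) := by
  simp only [selfInversiveQuartic, coeff_add, coeff_sub, coeff_C_mul, coeff_X_pow, coeff_X,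
    coeff_C, mul_ite, mul_one, mul_zero, @eq_comm _ 1 n]

lemma coeff_zero : selfInversiveQuartic.coeff 0 = 1 + I := by
  norm_num [coeff_eq]

lemma coeff_one : selfInversiveQuartic.coeff 1 = -2 := by
  norm_num [coeff_eq]

lemma coeff_two : selfInversiveQuartic.coeff 2 = 0 := by
  norm_num [coeff_eq]

lemma coeff_three : selfInversiveQuartic.coeff 3 = -(2 * I) := by
  norm_num [coeff_eq]

lemma coeff_four : selfInversiveQuartic.coeff 4 = 1 + I := by
  norm_num [coeff_eq]

lemma coeff_four_sub (k : ℕ) (hk : k ≤ 4) :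
    selfInversiveQuartic.coeff (4 - k) = I * conj (selfInversiveQuartic.coeff k) := by
  interval_cases k <;>
    simp [coeff_zero, coeff_one, coeff_two, coeff_three, coeff_four, Complex.ext_iff]

lemma norm_coeff_three_gt :
    (1 / 2) * (‖selfInversiveQuartic.coeff 0‖ + ‖selfInversiveQuartic.coeff 2‖
      + ‖selfInversiveQuartic.coeff 4‖) < ‖selfInversiveQuartic.coeff 3‖ := by
  simp only [coeff_zero, coeff_two, coeff_three, coeff_four, norm_one_add_I, norm_zero, norm_neg,
    norm_mul, norm_I, RCLike.norm_ofNat]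
  nlinarith [Real.sq_sqrt zero_le_two, Real.sqrt_nonneg 2]

lemma eval_eq (z : ℂ) :
    selfInversiveQuartic.eval z = (1 + I) * ((z ^ 2 - I) * (z - 1) * (z - I)) := by
  simp only [selfInversiveQuartic, eval_add, eval_sub, eval_mul, eval_C, eval_pow, eval_X]
  linear_combination (z ^ 3 - (I + 2) * z + (1 + I)) * I_sq

lemma norm_eq_one_of_eval_eq_zero {z : ℂ} (hz : selfInversiveQuartic.eval z = 0) : ‖z‖ = 1 := by
  rw [eval_eq, mul_eq_zero, or_iff_right one_add_I_ne_zero, mul_eq_zero, mul_eq_zero,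
    sub_eq_zero, sub_eq_zero, sub_eq_zero] at hz
  rcases hz with (hz | rfl) | rfl
  · exact norm_eq_one_of_pow_eq two_ne_zero hz norm_I
  · exact norm_one
  · exact norm_I

end selfInversiveQuartic

/-- The polynomial `h(z) = (1+i)z⁴ − 2i z³ − 2z + (1+i)` is self-inversive of degree 4
with `ω = i`, its coefficient `a₃ = −2i` satisfies `|a₃| > (1/2)(|a₀| + |a₂| + |a₄|)`,
and yet all four roots of `h` lie on the complex unit circle. -/
theorem example_weak_condition_all_roots_on_circle :
    letI h : Polynomial ℂ :=
      Polynomial.C (1 + Complex.I) * Polynomial.X ^ 4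
        - Polynomial.C (2 * Complex.I) * Polynomial.X ^ 3
        - Polynomial.C 2 * Polynomial.X
        + Polynomial.C (1 + Complex.I)
    h.natDegree = 4
      ∧ ‖Complex.I‖ = 1
      ∧ (∀ k ≤ 4, h.coeff (4 - k) = Complex.I * (starRingEnd ℂ) (h.coeff k))
      ∧ h.coeff 3 = -(2 * Complex.I)
      ∧ ‖h.coeff 3‖ >
          (1 / 2) * (‖h.coeff 0‖ + ‖h.coeff 2‖
            + ‖h.coeff 4‖)
      ∧ (∀ z : ℂ, h.eval z = 0 → ‖z‖ = 1) :=
  ⟨selfInversiveQuartic.natDegree_eq, norm_I, selfInversiveQuartic.coeff_four_sub,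
    selfInversiveQuartic.coeff_three, selfInversiveQuartic.norm_coeff_three_gt,
    fun _ => selfInversiveQuartic.norm_eq_one_of_eval_eq_zero⟩
end

section
/- Let n ≥ 3, let a be an integer with 1 ≤ a ≤ n, let ω_a = e^{2πia/n} with ω_a ≠ −1, and let Δ be a real number. Define P_a(z) = (ω_a+1)z^n − 2ω_aΔ·z^{n−1} − 2Δ·z + (ω_a+1). If |Δ| > (n/(n−2))·|ω_a + 1|/2, then P_a has exactly n−2 roots on the complex unit circle U, all of which are simple, and the remaining two roots are of the form s and ω_a/s for some complex number s with |s| ≠ 1. -/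
/-!
Write `ωₐ = e^{2iα}` with `α = πa/n` and `c = cos α`, so that `ωₐ + 1 = 2c e^{iα}` and the
hypothesis on `Δ` reads `n|c| < (n - 2)|Δ|`.

On the circle, `P(e^{2it}) = 4 e^{i(α + nt)} (c cos(nt) - Δ cos((n - 2)t + α))`. At the `n - 1`
points where `(n - 2)t + α ∈ πℤ` the second term equals `±Δ`, dominates the first and alternates
in sign, so the bracket has `n - 2` zeros in an interval of length `π`: these give `n - 2` distinct
roots on `U`.

Off the circle, `P(e^{iα} w) = 2 e^{iα} (c((-1)^a wⁿ + 1) - Δ((-1)^a w^{n-1} + w))`, and the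
intermediate value theorem gives a real zero `w` with `|w| > 1`. As `ωₐⁿ = 1`, `z ↦ ωₐ/z` maps
roots to roots, so `s = e^{iα} w` and `ωₐ/s` (of modulus `1/|w|`) are roots as well. Having found
`n = deg P` distinct roots, we have found them all.
-/

open Polynomial Complex Set Function
open scoped Real

theorem exists_mem_Ioo_eq_zero_of_mul_neg_s10 {f : ℝ → ℝ} (hf : Continuous f) {x y : ℝ}
    (hxy : x < y) (h : f x * f y < 0) : ∃ t ∈ Ioo x y, f t = 0 := by
  rcases mul_neg_iff.1 h with ⟨hx, hy⟩ | ⟨hx, hy⟩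
  · exact intermediate_value_Ioo' hxy.le hf.continuousOn ⟨hy, hx⟩
  · exact intermediate_value_Ioo hxy.le hf.continuousOn ⟨hx, hy⟩

theorem exists_strictMono_zeros_of_mul_neg {f : ℝ → ℝ} (hf : Continuous f) {τ : ℕ → ℝ}
    (hτ : StrictMono τ) {m : ℕ} (h : ∀ i < m, f (τ i) * f (τ (i + 1)) < 0) :
    ∃ T : Fin m → ℝ, StrictMono T ∧ ∀ i, T i ∈ Ioo (τ 0) (τ m) ∧ f (T i) = 0 := by
  have hzero (i : Fin m) : ∃ t ∈ Ioo (τ i) (τ (i + 1)), f t = 0 :=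
    exists_mem_Ioo_eq_zero_of_mul_neg_s10 hf (hτ (Nat.lt_succ_self _)) (h i i.isLt)
  choose T hT hT0 using hzero
  refine ⟨T, fun i j hij => ?_, fun i => ⟨⟨?_, ?_⟩, hT0 i⟩⟩
  · exact (hT i).2.trans_le ((hτ.monotone (Nat.succ_le_of_lt hij)).trans_lt (hT j).1).le
  · exact (hτ.monotone (Nat.zero_le _)).trans_lt (hT i).1
  · exact (hT i).2.trans_le (hτ.monotone i.isLt)

theorem sub_mul_add_neg_of_abs_lt {x y e : ℝ} (hx : |x| < |e|) (hy : |y| < |e|) :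
    (x - e) * (y + e) < 0 := by
  rcases le_or_gt 0 e with he | he
  · rw [abs_of_nonneg he, abs_lt] at hx hy
    exact mul_neg_of_neg_of_pos (by linarith) (by linarith)
  · rw [abs_of_neg he, abs_lt] at hx hy
    exact mul_neg_of_pos_of_neg (by linarith) (by linarith)

theorem exists_strictMono_mul_eq_mul_cos {g : ℝ → ℝ} (hg : Continuous g)
    (hg1 : ∀ t, |g t| ≤ 1) {c d : ℝ} (hcd : |c| < |d|) {m : ℕ} (hm : 0 < m) (α : ℝ) :
    ∃ T : Fin m → ℝ, StrictMono T ∧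
      ∀ i, T i ∈ Ioo (-α / m) (-α / m + π) ∧ c * g (T i) = d * Real.cos (m * T i + α) := by
  have hm' : (0 : ℝ) < m := Nat.cast_pos.2 hm
  set τ : ℕ → ℝ := fun i => (i * π - α) / m
  have hτ : StrictMono τ := fun i j hij => by
    have : (i : ℝ) < j := Nat.cast_lt.2 hij
    simp only [τ]
    gcongr
  have hcos (i : ℕ) : Real.cos (m * τ i + α) = (-1) ^ i := by
    rw [← Real.cos_nat_mul_pi]
    congr 1
    simp only [τ]
    field_simp
    ring
  -- at `τ i` the cosine term is `(-1) ^ i * d`, which dominates `c * g`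
  have hsmall (t : ℝ) (i : ℕ) : |c * g t| < |d * (-1) ^ i| := by
    rw [abs_mul, abs_mul, abs_pow, abs_neg, abs_one, one_pow, mul_one]
    exact (mul_le_of_le_one_right (abs_nonneg c) (hg1 t)).trans_lt hcd
  obtain ⟨T, hT, hzero⟩ := exists_strictMono_zeros_of_mul_neg
    (f := fun t => c * g t - d * Real.cos (m * t + α)) (by fun_prop) hτ fun i _ => by
      simp only [hcos, pow_succ, mul_neg, mul_one, sub_neg_eq_add]
      exact sub_mul_add_neg_of_abs_lt (hsmall _ i) (hsmall _ i)
  refine ⟨T, hT, fun i => ⟨?_, sub_eq_zero.1 (hzero i).2⟩⟩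
  convert (hzero i).1 using 2 <;> simp only [τ] <;> field_simp <;> ring

theorem eq_sub_one_mul_geom_sum (m : ℕ) (c d w : ℝ) :
    c * (-w ^ (m + 2) + 1) - d * (-w ^ (m + 1) + w)
      = (w - 1) * (d * w * ∑ i ∈ Finset.range m, w ^ i
          - c * ∑ i ∈ Finset.range (m + 2), w ^ i) := by
  linear_combination (-d * w) * geom_sum_mul w m + c * geom_sum_mul w (m + 2)

theorem exists_one_lt_eq_of_pos {m j : ℕ} {c d : ℝ} (hc : 0 < c)
    (hcd : (m + 2) * c < m * d) :
    ∃ w : ℝ, 1 < w ∧ c * ((-1) ^ j * w ^ (m + 2) + 1) = d * ((-1) ^ j * w ^ (m + 1) + w) := by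
  have hdc : c < d := by nlinarith [(Nat.cast_nonneg m : (0 : ℝ) ≤ m)]
  rcases neg_one_pow_eq_or ℝ j with hσ | hσ <;> simp only [hσ, one_mul, neg_one_mul]
  · -- the difference of the two sides is `2(c - d) < 0` at `1` and positive at `2d/c`
    set W := 2 * d / c
    have hW : 1 < W := by rw [one_lt_div hc]; linarith
    have hWpow : W ≤ W ^ (m + 1) := le_self_pow₀ hW.le (Nat.succ_ne_zero m)
    have hcW : c * W = 2 * d := by simp only [W]; field_simp
    obtain ⟨w, hw, hw0⟩ := intermediate_value_Ioo hW.le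
      (f := fun w => c * (w ^ (m + 2) + 1) - d * (w ^ (m + 1) + w)) (by fun_prop)
      (show (0 : ℝ) ∈ Set.Ioo _ _ from ⟨by simp only [one_pow]; linarith, by
        rw [pow_succ' W (m + 1)]
        nlinarith⟩)
    exact ⟨w, hw.1, sub_eq_zero.1 hw0⟩
  · -- `w = 1` is a solution here; the sign change on `[1, d/c]` is that of the quotient by `w - 1`
    set W := d / c
    have hW : 1 < W := by rw [one_lt_div hc]; linarith
    have hcW : c * (W * W ^ (m + 1)) = d * W ^ (m + 1) := by simp only [W]; field_simp
    set R : ℝ → ℝ := fun w =>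
      d * w * ∑ i ∈ Finset.range m, w ^ i - c * ∑ i ∈ Finset.range (m + 2), w ^ i
    have hR1 : 0 < R 1 := by
      simp only [R, mul_one, one_pow, Finset.sum_const, Finset.card_range, nsmul_eq_mul,
        Nat.cast_add, Nat.cast_ofNat, sub_pos]
      linarith
    have hRW : R W < 0 := by
      refine neg_of_mul_neg_right (a := W - 1) ?_ (by linarith)
      rw [← eq_sub_one_mul_geom_sum, pow_succ' W (m + 1)]
      nlinarith [mul_lt_mul_of_pos_left hW (hc.trans hdc)]
    obtain ⟨w, hw, hw0⟩ := intermediate_value_Ioo' hW.le (f := R) (by fun_prop) ⟨hRW, hR1⟩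
    refine ⟨w, hw.1, sub_eq_zero.1 ?_⟩
    rw [eq_sub_one_mul_geom_sum]
    exact mul_eq_zero_of_right _ hw0

theorem exists_one_lt_abs_eq {m j : ℕ} {c d : ℝ} (hc : c ≠ 0)
    (hcd : (m + 2) * |c| < m * |d|) :
    ∃ w : ℝ, 1 < |w| ∧ c * ((-1) ^ j * w ^ (m + 2) + 1) = d * ((-1) ^ j * w ^ (m + 1) + w) := by
  wlog hc' : 0 < c generalizing c d
  · obtain ⟨w, hw, hweq⟩ := this (c := -c) (d := -d) (neg_ne_zero.2 hc)
      (by rwa [abs_neg, abs_neg]) (neg_pos.2 (hc.lt_or_gt.resolve_right hc'))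
    exact ⟨w, hw, by linear_combination -hweq⟩
  rw [abs_of_pos hc'] at hcd
  rcases lt_trichotomy d 0 with hd | rfl | hd
  · -- `w ↦ -w` turns the equation for `(j, d)` into the one for `(j + m, -d)`
    obtain ⟨w, hw, hweq⟩ := exists_one_lt_eq_of_pos (j := j + m) (d := -d) hc'
      (by rwa [abs_of_neg hd] at hcd)
    refine ⟨-w, by rwa [abs_neg, abs_of_pos (one_pos.trans hw)], ?_⟩
    rw [neg_pow w, neg_pow w]
    linear_combination hweq
  · simp only [abs_zero, mul_zero] at hcd
    nlinarith
  · obtain ⟨w, hw, hweq⟩ := exists_one_lt_eq_of_pos (j := j) hc'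
      (by rwa [abs_of_pos hd] at hcd)
    exact ⟨w, by rwa [abs_of_pos (one_pos.trans hw)], hweq⟩

theorem Polynomial.roots_eq_of_nodup {R : Type*} [CommRing R] [IsDomain R] {P : R[X]}
    (hP : P ≠ 0) {M : Multiset R} (hM : M.Nodup) (hcard : Multiset.card M = P.natDegree)
    (hroot : ∀ z ∈ M, P.IsRoot z) : P.roots = M :=
  (Multiset.eq_of_le_of_card_le ((Multiset.le_iff_subset hM).2 fun z hz =>
    (mem_roots hP).2 (hroot z hz)) (hcard ▸ card_roots' P)).symm

theorem nodup_cons_cons_map_of_norm {m : ℕ} {ω s : ℂ} {e : Fin m → ℂ} (hω : ‖ω‖ = 1)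
    (hs : 1 < ‖s‖) (he : Injective e) (he1 : ∀ i, ‖e i‖ = 1) :
    (s ::ₘ ω / s ::ₘ Finset.univ.val.map e).Nodup := by
  have hωs : ‖ω / s‖ < 1 := by rw [norm_div, hω, one_div]; exact inv_lt_one_of_one_lt₀ hs
  have hnot {z : ℂ} (hz : ‖z‖ ≠ 1) : z ∉ Finset.univ.val.map e := by
    simp only [Multiset.mem_map]
    rintro ⟨i, -, rfl⟩
    exact hz (he1 i)
  refine Multiset.nodup_cons.2
    ⟨?_, Multiset.nodup_cons.2 ⟨hnot hωs.ne, Finset.univ.nodup.map he⟩⟩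
  rw [Multiset.mem_cons]
  rintro (h | h)
  · exact (hωs.trans hs).ne (congrArg norm h).symm
  · exact hnot hs.ne' h

theorem roots_norm_eq_one_of_roots_eq {P : ℂ[X]} {m : ℕ} {ω s : ℂ} {e : Fin m → ℂ}
    (hω : ‖ω‖ = 1) (hs : 1 < ‖s‖) (he : Injective e) (he1 : ∀ i, ‖e i‖ = 1)
    (hP : P.roots = s ::ₘ ω / s ::ₘ Finset.univ.val.map e) :
    {z : ℂ | P.eval z = 0 ∧ ‖z‖ = 1}.ncard = m ∧
      (∀ z : ℂ, ‖z‖ = 1 → P.eval z = 0 → P.rootMultiplicity z = 1) ∧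
      P.roots.filter (fun z : ℂ => ‖z‖ ≠ 1) = {s, ω / s} := by
  have hωs : ‖ω / s‖ ≠ 1 := by
    rw [norm_div, hω, one_div]; exact (inv_lt_one_of_one_lt₀ hs).ne
  have hnd : P.roots.Nodup := hP ▸ nodup_cons_cons_map_of_norm hω hs he he1
  have hP0 : P ≠ 0 := by
    rintro rfl
    exact Multiset.cons_ne_zero (roots_zero (R := ℂ) ▸ hP).symm
  have hcircle : {z : ℂ | P.eval z = 0 ∧ ‖z‖ = 1} = range e := by
    ext z
    simp only [mem_ofPred_eq, mem_range]
    constructor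
    · rintro ⟨hz, hz1⟩
      have hzroot := (mem_roots hP0).2 hz
      rw [hP, Multiset.mem_cons, Multiset.mem_cons, Multiset.mem_map] at hzroot
      rcases hzroot with rfl | rfl | ⟨i, -, rfl⟩
      exacts [absurd hz1 hs.ne', absurd hz1 hωs, ⟨i, rfl⟩]
    · rintro ⟨i, rfl⟩
      exact ⟨(mem_roots hP0).1 (by simp [hP]), he1 i⟩
  refine ⟨by rw [hcircle, ncard_range_of_injective he, Nat.card_fin], fun z _ hz => ?_, ?_⟩
  · rw [← count_roots]
    exact Multiset.count_eq_one_of_mem hnd ((mem_roots hP0).2 hz)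
  · rw [hP, Multiset.filter_cons_of_pos (p := fun z : ℂ => ‖z‖ ≠ 1) _ hs.ne',
      Multiset.filter_cons_of_pos (p := fun z : ℂ => ‖z‖ ≠ 1) _ hωs,
      Multiset.filter_eq_nil.2 (by simp [he1])]
    rfl

theorem exp_ofReal_mul_I_add_inv (θ : ℝ) :
    cexp (θ * I) + (cexp (θ * I))⁻¹ = 2 * Real.cos θ := by
  rw [ofReal_cos, two_cos, ← exp_neg, neg_mul]

theorem exp_ofReal_mul_I_sq_add_one (α : ℝ) :
    cexp (α * I) ^ 2 + 1 = 2 * Real.cos α * cexp (α * I) := by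
  rw [← exp_ofReal_mul_I_add_inv]
  field_simp

theorem exp_ofReal_mul_I_sq_eq_neg_one_iff (α : ℝ) :
    cexp (α * I) ^ 2 = -1 ↔ Real.cos α = 0 := by
  rw [← add_eq_zero_iff_eq_neg, exp_ofReal_mul_I_sq_add_one, mul_eq_zero,
    or_iff_left (exp_ne_zero _)]
  norm_cast
  simp

theorem exp_ofReal_mul_I_pow_eq_neg_one_pow {n a : ℕ} {α : ℝ} (hα : n * α = π * a) :
    cexp (α * I) ^ n = (-1) ^ a := by
  rw [← exp_nat_mul, ← exp_pi_mul_I, ← exp_nat_mul]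
  congr 1
  linear_combination I * (by exact_mod_cast hα : (n : ℂ) * α = π * a)

theorem injOn_exp_ofReal_mul_I_sq (t₀ : ℝ) :
    InjOn (fun t : ℝ => cexp (t * I) ^ 2) (Ioo t₀ (t₀ + π)) := by
  intro t ht t' ht' h
  simp only [← exp_nat_mul, exp_eq_exp_iff_exists_int] at h
  obtain ⟨k, hk⟩ := h
  have hk' : 2 * t = 2 * t' + k * (2 * π) := by
    have : ((2 * t : ℝ) : ℂ) * I = ((2 * t' + k * (2 * π) : ℝ) : ℂ) * I := by
      push_cast
      linear_combination hk
    exact_mod_cast mul_right_cancel₀ I_ne_zero this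
  have hk0 : k = 0 := by
    have h1 : (k : ℝ) < 1 := by nlinarith [ht.1, ht.2, ht'.1, ht'.2, Real.pi_pos]
    have h2 : (-1 : ℝ) < k := by nlinarith [ht.1, ht.2, ht'.1, ht'.2, Real.pi_pos]
    have : k < 1 := by exact_mod_cast h1
    have : -1 < k := by exact_mod_cast h2
    omega
  rw [hk0, Int.cast_zero, zero_mul, add_zero] at hk'
  linarith

noncomputable def bethePoly (n : ℕ) (ω : ℂ) (Δ : ℝ) : ℂ[X] :=
  C (ω + 1) * X ^ n - C (2 * ω * (Δ : ℂ)) * X ^ (n - 1) - C (2 * (Δ : ℂ)) * X + C (ω + 1)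

section bethePoly

variable (m : ℕ) (Δ : ℝ)

theorem bethePoly_eval (ω z : ℂ) : (bethePoly (m + 2) ω Δ).eval z
    = (ω + 1) * z ^ (m + 2) - 2 * ω * Δ * z ^ (m + 1) - 2 * Δ * z + (ω + 1) := by
  simp [bethePoly]

theorem natDegree_bethePoly {ω : ℂ} (hω : ω ≠ -1) :
    (bethePoly (m + 2) ω Δ).natDegree = m + 2 := by
  unfold bethePoly
  compute_degree
  · simpa [eq_neg_iff_add_eq_zero] using hω
  all_goals omega

theorem bethePoly_eval_div_eq_zero {ω z : ℂ} (hω : ω ^ (m + 2) = 1)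
    (hz : (bethePoly (m + 2) ω Δ).eval z = 0) : (bethePoly (m + 2) ω Δ).eval (ω / z) = 0 := by
  -- `ω / 0 = 0`, so a root at `0` is its own partner
  rcases eq_or_ne z 0 with rfl | hz0
  · simpa using hz
  have hscale (k : ℕ) : z ^ k * (ω / z) ^ k = ω ^ k := by rw [← mul_pow, mul_div_cancel₀ ω hz0]
  have key : z ^ (m + 2) * (bethePoly (m + 2) ω Δ).eval (ω / z)
      = (bethePoly (m + 2) ω Δ).eval z := by
    rw [bethePoly_eval, bethePoly_eval]
    linear_combination (ω + 1) * hscale (m + 2) - 2 * ω * Δ * z * hscale (m + 1)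
      - 2 * Δ * z ^ (m + 1) * hscale 1 + ((ω + 1) - 2 * Δ * z) * hω
  rw [hz] at key
  exact (mul_eq_zero.1 key).resolve_left (pow_ne_zero _ hz0)

theorem bethePoly_eval_mul {v : ℂ} (hv : v ≠ 0) (w : ℂ) :
    (bethePoly (m + 2) (v ^ 2) Δ).eval (v * w) = v * ((v + v⁻¹) * (v ^ (m + 2) * w ^ (m + 2) + 1)
      - 2 * Δ * (v ^ (m + 2) * w ^ (m + 1) + w)) := by
  rw [bethePoly_eval]
  field_simp
  ring

theorem bethePoly_eval_sq {u v : ℂ} (hu : u ≠ 0) (hv : v ≠ 0) :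
    (bethePoly (m + 2) (v ^ 2) Δ).eval (u ^ 2) = v * u ^ (m + 2) *
      ((v + v⁻¹) * (u ^ (m + 2) + (u ^ (m + 2))⁻¹) - 2 * Δ * (v * u ^ m + (v * u ^ m)⁻¹)) := by
  rw [bethePoly_eval]
  field_simp
  ring

theorem bethePoly_eval_exp_sq (α t : ℝ) :
    (bethePoly (m + 2) (cexp (α * I) ^ 2) Δ).eval (cexp (t * I) ^ 2)
      = 4 * cexp (α * I) * cexp (t * I) ^ (m + 2) *
        (Real.cos α * Real.cos ((m + 2) * t) - Δ * Real.cos (m * t + α) : ℝ) := by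
  have hpow (k : ℕ) : cexp (t * I) ^ k = cexp ((k * t : ℝ) * I) := by
    rw [← exp_nat_mul]; push_cast; ring_nf
  have hmul : cexp (α * I) * cexp (t * I) ^ m = cexp ((m * t + α : ℝ) * I) := by
    rw [hpow, ← exp_add]; push_cast; ring_nf
  rw [bethePoly_eval_sq m Δ (exp_ne_zero _) (exp_ne_zero _), hmul, hpow (m + 2),
    exp_ofReal_mul_I_add_inv, exp_ofReal_mul_I_add_inv, exp_ofReal_mul_I_add_inv, ← hpow]
  push_cast
  ring

theorem bethePoly_eval_exp_mul (α : ℝ) (w : ℂ) :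
    (bethePoly (m + 2) (cexp (α * I) ^ 2) Δ).eval (cexp (α * I) * w) = 2 * cexp (α * I) *
      (Real.cos α * (cexp (α * I) ^ (m + 2) * w ^ (m + 2) + 1)
        - Δ * (cexp (α * I) ^ (m + 2) * w ^ (m + 1) + w)) := by
  rw [bethePoly_eval_mul m Δ (exp_ne_zero _), exp_ofReal_mul_I_add_inv]
  ring

end bethePoly

theorem exists_roots_norm_eq_one_bethePoly {m : ℕ} (hm : 0 < m) {α Δ : ℝ}
    (hΔ : |Real.cos α| < |Δ|) : ∃ e : Fin m → ℂ, Injective e ∧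
      ∀ i, ‖e i‖ = 1 ∧ (bethePoly (m + 2) (cexp (α * I) ^ 2) Δ).IsRoot (e i) := by
  obtain ⟨T, hT, hTmem⟩ :=
    exists_strictMono_mul_eq_mul_cos (g := fun t => Real.cos ((m + 2) * t)) (by fun_prop)
      (fun t => Real.abs_cos_le_one _) hΔ hm α
  refine ⟨fun i => cexp (T i * I) ^ 2,
    fun i j h => hT.injective (injOn_exp_ofReal_mul_I_sq _ (hTmem i).1 (hTmem j).1 h),
    fun i => ⟨by simp [norm_exp_ofReal_mul_I], ?_⟩⟩
  rw [IsRoot, bethePoly_eval_exp_sq, (hTmem i).2, sub_self, ofReal_zero, mul_zero]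

theorem exists_root_one_lt_norm_bethePoly {m a : ℕ} {α Δ : ℝ} (hα : (m + 2) * α = π * a)
    (hc : Real.cos α ≠ 0) (hΔ : (m + 2) * |Real.cos α| < m * |Δ|) :
    ∃ s : ℂ, 1 < ‖s‖ ∧ (bethePoly (m + 2) (cexp (α * I) ^ 2) Δ).IsRoot s := by
  obtain ⟨w, hw, hweq⟩ := exists_one_lt_abs_eq (j := a) hc hΔ
  have hσ : cexp (α * I) ^ (m + 2) = (-1) ^ a :=
    exp_ofReal_mul_I_pow_eq_neg_one_pow (by exact_mod_cast hα)
  refine ⟨cexp (α * I) * w, by simpa [norm_exp_ofReal_mul_I] using hw, ?_⟩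
  rw [IsRoot, bethePoly_eval_exp_mul, hσ, sub_eq_zero.2 (by exact_mod_cast hweq), mul_zero]

theorem exists_roots_bethePoly_eq {m a : ℕ} {α Δ : ℝ} (hα : (m + 2) * α = π * a)
    (hc : Real.cos α ≠ 0) (hΔ : (m + 2) * |Real.cos α| < m * |Δ|) :
    ∃ (s : ℂ) (e : Fin m → ℂ), 1 < ‖s‖ ∧ Injective e ∧ (∀ i, ‖e i‖ = 1) ∧
      (bethePoly (m + 2) (cexp (α * I) ^ 2) Δ).roots
        = s ::ₘ cexp (α * I) ^ 2 / s ::ₘ Finset.univ.val.map e := by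
  have hc' : 0 < |Real.cos α| := abs_pos.2 hc
  have hm : 0 < m := Nat.pos_of_ne_zero fun hm => by
    subst hm
    simp only [CharP.cast_eq_zero, zero_add, zero_mul] at hΔ
    linarith
  obtain ⟨e, he, he1⟩ := exists_roots_norm_eq_one_bethePoly hm (Δ := Δ)
    (by nlinarith [(Nat.cast_nonneg m : (0 : ℝ) ≤ m)])
  obtain ⟨s, hs, hsroot⟩ := exists_root_one_lt_norm_bethePoly hα hc hΔ
  have hω : ‖cexp (α * I) ^ 2‖ = 1 := by simp [norm_exp_ofReal_mul_I]
  have hω1 : cexp (α * I) ^ 2 ≠ -1 := (exp_ofReal_mul_I_sq_eq_neg_one_iff α).not.2 hc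
  have hωpow : (cexp (α * I) ^ 2) ^ (m + 2) = 1 := by
    rw [← pow_mul, pow_mul', exp_ofReal_mul_I_pow_eq_neg_one_pow (by exact_mod_cast hα),
      ← pow_mul, pow_mul', neg_one_sq, one_pow]
  refine ⟨s, e, hs, he, fun i => (he1 i).1, roots_eq_of_nodup ?_
    (nodup_cons_cons_map_of_norm hω hs he fun i => (he1 i).1) ?_ ?_⟩
  · exact ne_zero_of_natDegree_gt (n := 0) (by rw [natDegree_bethePoly m Δ hω1]; omega)
  · simp [natDegree_bethePoly m Δ hω1]
  · simp only [Multiset.mem_cons, Multiset.mem_map]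
    rintro z (rfl | rfl | ⟨i, -, rfl⟩)
    · exact hsroot
    · exact bethePoly_eval_div_eq_zero m Δ hωpow hsroot
    · exact (he1 i).2

theorem bethe_polynomial_two_roots_off_circle_general
    (n : ℕ) (hn : 3 ≤ n) (a : ℕ)
    (Δ : ℝ)
    (hωa : Complex.exp (2 * Real.pi * Complex.I * a / n) ≠ -1)
    (hΔ : |Δ| > ((n : ℝ) / ((n : ℝ) - 2)) *
      ‖Complex.exp (2 * Real.pi * Complex.I * a / n) + 1‖ / 2) :
    letI ωa : ℂ := Complex.exp (2 * Real.pi * Complex.I * a / n)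
    letI P : Polynomial ℂ :=
      Polynomial.C (ωa + 1) * Polynomial.X ^ n
        - Polynomial.C (2 * ωa * (Δ : ℂ)) * Polynomial.X ^ (n - 1)
        - Polynomial.C (2 * (Δ : ℂ)) * Polynomial.X
        + Polynomial.C (ωa + 1)
    ({z : ℂ | P.eval z = 0 ∧ ‖z‖ = 1}.ncard = n - 2)
      ∧ (∀ z : ℂ, ‖z‖ = 1 → P.eval z = 0 → Polynomial.rootMultiplicity z P = 1)
      ∧ (∃ s : ℂ, ‖s‖ ≠ 1 ∧
          Multiset.filter (fun z : ℂ => ‖z‖ ≠ 1) P.roots = {s, ωa / s}) := by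
  obtain ⟨m, rfl⟩ : ∃ m, n = m + 2 := ⟨n - 2, by omega⟩
  set α : ℝ := π * a / (m + 2)
  have hα : (m + 2) * α = π * a := by simp only [α]; field_simp
  have hω : cexp (2 * π * I * a / (m + 2 : ℕ)) = cexp (α * I) ^ 2 := by
    rw [← exp_nat_mul]; simp only [α]; push_cast; field_simp
  rw [hω, exp_ofReal_mul_I_sq_add_one] at hΔ
  rw [hω] at hωa ⊢
  have hc : Real.cos α ≠ 0 := (exp_ofReal_mul_I_sq_eq_neg_one_iff α).not.1 hωa
  have hΔ' : (m + 2) * |Real.cos α| < m * |Δ| := by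
    have hm : (0 : ℝ) < m := by exact_mod_cast (by omega : 0 < m)
    simp only [norm_mul, norm_exp_ofReal_mul_I, norm_real, Real.norm_eq_abs, Complex.norm_ofNat,
      mul_one] at hΔ
    push_cast at hΔ
    rw [add_sub_cancel_right] at hΔ
    field_simp at hΔ
    linarith
  obtain ⟨s, e, hs, he, he1, hroots⟩ := exists_roots_bethePoly_eq hα hc hΔ'
  obtain ⟨hcard, hsimple, hfilter⟩ :=
    roots_norm_eq_one_of_roots_eq (by simp [norm_exp_ofReal_mul_I]) hs he he1 hroots
  exact ⟨hcard, hsimple, s, hs.ne', hfilter⟩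

/-- For `ωₐ = e^{2πia/n}` with `ωₐ ≠ −1`, `n ≥ 3`, and `Δ` real, if
`|Δ| > (n/(n−2))·|ωₐ + 1|/2` then `Pₐ(z) = (ωₐ+1)zⁿ − 2ωₐΔ z^{n−1} − 2Δ z + (ωₐ+1)`
has exactly `n − 2` roots on the complex unit circle, all of them simple, and the two
remaining roots are `s` and `ωₐ/s` for some `s` with `|s| ≠ 1`. -/
theorem bethe_polynomial_two_roots_off_circle
    (n : ℕ) (hn : 3 ≤ n) (a : ℕ) (ha : 1 ≤ a) (han : a ≤ n)
    (Δ : ℝ)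
    (hωa : Complex.exp (2 * Real.pi * Complex.I * a / n) ≠ -1)
    (hΔ : |Δ| > ((n : ℝ) / ((n : ℝ) - 2)) *
      ‖Complex.exp (2 * Real.pi * Complex.I * a / n) + 1‖ / 2) :
    letI ωa : ℂ := Complex.exp (2 * Real.pi * Complex.I * a / n)
    letI P : Polynomial ℂ :=
      Polynomial.C (ωa + 1) * Polynomial.X ^ n
        - Polynomial.C (2 * ωa * (Δ : ℂ)) * Polynomial.X ^ (n - 1)
        - Polynomial.C (2 * (Δ : ℂ)) * Polynomial.X
        + Polynomial.C (ωa + 1)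
    ({z : ℂ | P.eval z = 0 ∧ ‖z‖ = 1}.ncard = n - 2)
      ∧ (∀ z : ℂ, ‖z‖ = 1 → P.eval z = 0 → Polynomial.rootMultiplicity z P = 1)
      ∧ (∃ s : ℂ, ‖s‖ ≠ 1 ∧
          Multiset.filter (fun z : ℂ => ‖z‖ ≠ 1) P.roots = {s, ωa / s}) :=
  bethe_polynomial_two_roots_off_circle_general n hn a Δ hωa hΔ
end
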